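/- arXiv:2602.23180 — 13 statements merged into one kernel-verified Lean document; each statement's English description precedes it below -/
import Mathlib

section
/- For all v ∈ [0,1] and all t ∈ [0,1], the Hashin–Shtrikman correction is nonnegative: q(t;v) ≥ 0. Equivalently, the Hashin–Shtrikman upper-bound function satisfies f^HS(t;v) ≤ (κ⁻ + v·Δκ)·t² + (μ⁻ + v·Δμ)·(1 − t²), i.e. it never exceeds the Voigt energy. -/
open Real

/-- The square root `s = √(1 - t²)`. -/
noncomputable def sHS (t : ℝ) : ℝ := Real.sqrt (1 - t ^ 2)

/-- The Hashin–Shtrikman correction term `q(t; v)` for two well-ordered isotropic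
plane-stress phases with bulk moduli `κm < κp` and shear moduli `μm < μp`. -/
noncomputable def qHS (κm κp μm μp t v : ℝ) : ℝ :=
  if v * (κp - κm) * t ≤ (κp + μp - (κp - κm) * v) * sHS t ∧
     v * (μp - μm) * sHS t ≤ (κp + μp - (μp - μm) * v) * t then
    v * (1 - v) * ((κp - κm) * t - (μp - μm) * sHS t) ^ 2 /
      (κp + μp - ((κp - κm) + (μp - μm)) * v)
  else if (κp + μp - (κp - κm) * v) * sHS t < v * (κp - κm) * t then
    (1 - v) * (v * (κp - κm) ^ 2 * t ^ 2 / (κp + μp - (κp - κm) * v)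
      - (μp - μm) * (sHS t) ^ 2)
  else
    (1 - v) * (v * (μp - μm) ^ 2 * (sHS t) ^ 2 / (κp + μp - (μp - μm) * v)
      - (κp - κm) * t ^ 2)

/-- The Hashin–Shtrikman upper-bound function `f^HS(t; v)`:
the Voigt energy minus the correction `q(t; v)`. -/
noncomputable def fHS (κm κp μm μp t v : ℝ) : ℝ :=
  (κm + v * (κp - κm)) * t ^ 2 + (μm + v * (μp - μm)) * (1 - t ^ 2)
    - qHS κm κp μm μp t v

/-! The interior regime makes `q` a nonnegative multiple of a square. In a corner regime, say
`d₂ s < v Δκ t`, squaring gives `d₂² s² < (v Δκ t)²`, and `Δμ v ≤ d₂` (which is `d₁ ≥ 0`)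
then yields `Δμ s² d₂ ≤ v Δκ² t²`; the other corner is the same with the roles of
`(Δκ, t)` and `(Δμ, s)` exchanged. -/

theorem mul_sq_le_div_of_mul_lt {K : Type*} [Field K] [LinearOrder K] [IsStrictOrderedRing K]
    {a b d s t v : K} (hv : 0 ≤ v) (hd : 0 < d) (hs : 0 ≤ s) (hb : 0 ≤ b) (hbv : b * v ≤ d)
    (h : d * s < v * a * t) :
    b * s ^ 2 ≤ v * a ^ 2 * t ^ 2 / d := by
  have hsq : (d * s) ^ 2 ≤ (v * a * t) ^ 2 := pow_le_pow_left₀ (by positivity) h.le 2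
  rw [le_div_iff₀ hd]
  refine le_of_mul_le_mul_right ?_ hd
  calc b * s ^ 2 * d * d = b * (d * s) ^ 2 := by ring
    _ ≤ b * (v * a * t) ^ 2 := mul_le_mul_of_nonneg_left hsq hb
    _ = b * v * (v * a ^ 2 * t ^ 2) := by ring
    _ ≤ d * (v * a ^ 2 * t ^ 2) := mul_le_mul_of_nonneg_right hbv (by positivity)
    _ = v * a ^ 2 * t ^ 2 * d := by ring

section

variable {κm κp μm μp v : ℝ}

theorem hs_denom_pos (hκm : 0 < κm) (hκ : κm < κp) (hμm : 0 < μm) (hμ : μm < μp)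
    (hv1 : v ≤ 1) :
    0 < κp + μp - ((κp - κm) + (μp - μm)) * v := by
  nlinarith

theorem qHS_nonneg {t : ℝ} (hκm : 0 < κm) (hκ : κm < κp) (hμm : 0 < μm) (hμ : μm < μp)
    (hv0 : 0 ≤ v) (hv1 : v ≤ 1) (ht : 0 ≤ t) :
    0 ≤ qHS κm κp μm μp t v := by
  have hd₁ := hs_denom_pos hκm hκ hμm hμ hv1
  have hs : 0 ≤ sHS t := Real.sqrt_nonneg _
  have h1v : 0 ≤ 1 - v := sub_nonneg.2 hv1
  unfold qHS
  split_ifs with hint hcorner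
  · exact div_nonneg (mul_nonneg (mul_nonneg hv0 h1v) (sq_nonneg _)) hd₁.le
  · refine mul_nonneg h1v (sub_nonneg.2 ?_)
    exact mul_sq_le_div_of_mul_lt hv0 (by nlinarith) hs (by linarith) (by linarith) hcorner
  · have hcorner' : (κp + μp - (μp - μm) * v) * t < v * (μp - μm) * sHS t := by
      by_contra! h
      exact hint ⟨not_lt.1 hcorner, h⟩
    refine mul_nonneg h1v (sub_nonneg.2 ?_)
    exact mul_sq_le_div_of_mul_lt hv0 (by nlinarith) ht (by linarith) (by linarith) hcorner'

end

/-- For all `v ∈ [0,1]` and `t ∈ [0,1]`, the Hashin–Shtrikman correction is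
nonnegative, `q(t;v) ≥ 0`; equivalently `f^HS(t;v)` never exceeds the Voigt energy. -/
theorem hs_correction_nonneg
    (κm κp μm μp : ℝ) (hκm : 0 < κm) (hκ : κm < κp) (hμm : 0 < μm) (hμ : μm < μp)
    (v : ℝ) (hv : v ∈ Set.Icc (0 : ℝ) 1) (t : ℝ) (ht : t ∈ Set.Icc (0 : ℝ) 1) :
    0 ≤ qHS κm κp μm μp t v ∧
      fHS κm κp μm μp t v ≤
        (κm + v * (κp - κm)) * t ^ 2 + (μm + v * (μp - μm)) * (1 - t ^ 2) := by
  obtain ⟨hv0, hv1⟩ := hv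
  have hq := qHS_nonneg hκm hκ hμm hμ hv0 hv1 ht.1
  exact ⟨hq, sub_le_self _ hq⟩
end

section
/- For all v ∈ [0,1] and t ∈ [0,1], the Hashin–Shtrikman correction vanishes exactly at the endpoints or on the degenerate invariant line: q(t;v) = 0 if and only if v = 0, or v = 1, or Δκ·t = Δμ·√(1 − t²). -/
open Real

set_option maxHeartbeats 2000000 in
/-- For all `v ∈ [0,1]` and `t ∈ [0,1]`, the Hashin–Shtrikman correction vanishes
exactly at the endpoints of the volume-fraction interval or on the degenerate
invariant line `Δκ·t = Δμ·√(1 - t²)`. -/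
theorem hs_correction_eq_zero_iff
    (κm κp μm μp : ℝ) (hκm : 0 < κm) (hκ : κm < κp) (hμm : 0 < μm) (hμ : μm < μp)
    (v : ℝ) (hv : v ∈ Set.Icc (0 : ℝ) 1) (t : ℝ) (ht : t ∈ Set.Icc (0 : ℝ) 1) :
    qHS κm κp μm μp t v = 0 ↔
      v = 0 ∨ v = 1 ∨ (κp - κm) * t = (μp - μm) * Real.sqrt (1 - t ^ 2) := by
  obtain ⟨hv0, hv1⟩ := hv
  obtain ⟨ht0, ht1⟩ := ht
  unfold qHS sHS
  set s : ℝ := Real.sqrt (1 - t ^ 2) with hs_def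
  have hs0 : 0 ≤ s := Real.sqrt_nonneg _
  have hss : s ^ 2 = 1 - t ^ 2 := Real.sq_sqrt (by nlinarith)
  set a : ℝ := κp - κm with ha_def
  set b : ℝ := μp - μm with hb_def
  have ha : 0 < a := by simp only [ha_def]; linarith
  have hb : 0 < b := by simp only [hb_def]; linarith
  have hd1 : 0 < κp + μp - (a + b) * v := by
    nlinarith [mul_nonneg (by linarith : (0:ℝ) ≤ a + b) (by linarith : (0:ℝ) ≤ 1 - v)]
  have hd2 : 0 < κp + μp - a * v := by
    nlinarith [mul_nonneg ha.le (by linarith : (0:ℝ) ≤ 1 - v)]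
  have hd3 : 0 < κp + μp - b * v := by
    nlinarith [mul_nonneg hb.le (by linarith : (0:ℝ) ≤ 1 - v)]
  have hd2b : b < κp + μp - a * v := by
    nlinarith [mul_nonneg ha.le (by linarith : (0:ℝ) ≤ 1 - v)]
  have hd3a : a < κp + μp - b * v := by
    nlinarith [mul_nonneg hb.le (by linarith : (0:ℝ) ≤ 1 - v)]
  by_cases h1 : v * a * t ≤ (κp + μp - a * v) * s ∧ v * b * s ≤ (κp + μp - b * v) * t
  · rw [if_pos h1, div_eq_zero_iff]
    constructor
    · rintro (h | h)
      · rcases mul_eq_zero.1 h with h | h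
        · rcases mul_eq_zero.1 h with h | h
          · exact Or.inl h
          · exact Or.inr (Or.inl (by linarith))
        · have h' : a * t - b * s = 0 := by
            exact (pow_eq_zero_iff two_ne_zero).1 h
          exact Or.inr (Or.inr (sub_eq_zero.1 h'))
      · exact absurd h hd1.ne'
    · rintro (h | h | h)
      · left; rw [h]; ring
      · left; rw [h]; ring
      · left; have h' : a * t - b * s = 0 := sub_eq_zero.2 h
        rw [h']; ring
  · by_cases h2 : (κp + μp - a * v) * s < v * a * t
    · rw [if_neg h1, if_pos h2]
      have hvat : 0 < v * a * t := lt_of_le_of_lt (mul_nonneg hd2.le hs0) h2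
      have hv_pos : 0 < v := by
        by_contra h; push_neg at h
        nlinarith [mul_nonneg ha.le ht0]
      have ht_pos : 0 < t := by
        by_contra h; push_neg at h
        nlinarith [mul_nonneg hv0 ha.le]
      have hgt : b * s < a * t := by
        nlinarith [mul_nonneg hs0 (by linarith : (0:ℝ) ≤ (κp + μp - a * v) - b),
          mul_nonneg (by linarith : (0:ℝ) ≤ 1 - v) (mul_nonneg ha.le ht0)]
      have key : b * s ^ 2 * (κp + μp - a * v) < v * a ^ 2 * t ^ 2 := by
        nlinarith [mul_lt_mul_of_pos_left h2 (mul_pos ha ht_pos),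
          mul_nonneg (mul_nonneg hd2.le hs0) (by linarith : (0:ℝ) ≤ a * t - b * s)]
      have hEpos : 0 < v * a ^ 2 * t ^ 2 / (κp + μp - a * v) - b * s ^ 2 := by
        rw [sub_pos, lt_div_iff₀ hd2]
        linarith [key]
      constructor
      · intro h
        rcases mul_eq_zero.1 h with h | h
        · exact Or.inr (Or.inl (by linarith))
        · exact absurd h hEpos.ne'
      · rintro (h | h | h)
        · exact absurd h hv_pos.ne'
        · rw [h]; ring
        · exact absurd h hgt.ne'
    · rw [if_neg h1, if_neg h2]
      push_neg at h1 h2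
      have h3 : (κp + μp - b * v) * t < v * b * s := h1 h2
      have hvbs : 0 < v * b * s := lt_of_le_of_lt (mul_nonneg hd3.le ht0) h3
      have hv_pos : 0 < v := by
        by_contra h; push_neg at h
        nlinarith [mul_nonneg hb.le hs0]
      have hs_pos : 0 < s := by
        by_contra h; push_neg at h
        nlinarith [mul_nonneg hv0 hb.le]
      have hgt : a * t < b * s := by
        nlinarith [mul_nonneg ht0 (by linarith : (0:ℝ) ≤ (κp + μp - b * v) - a),
          mul_nonneg (by linarith : (0:ℝ) ≤ 1 - v) (mul_nonneg hb.le hs0)]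
      have key : a * t ^ 2 * (κp + μp - b * v) < v * b ^ 2 * s ^ 2 := by
        nlinarith [mul_lt_mul_of_pos_left h3 (mul_pos hb hs_pos),
          mul_nonneg (mul_nonneg hd3.le ht0) (by linarith : (0:ℝ) ≤ b * s - a * t)]
      have hEpos : 0 < v * b ^ 2 * s ^ 2 / (κp + μp - b * v) - a * t ^ 2 := by
        rw [sub_pos, lt_div_iff₀ hd3]
        linarith [key]
      constructor
      · intro h
        rcases mul_eq_zero.1 h with h | h
        · exact Or.inr (Or.inl (by linarith))
        · exact absurd h hEpos.ne'
      · rintro (h | h | h)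
        · exact absurd h hv_pos.ne'
        · rw [h]; ring
        · exact absurd h hgt.ne
end

section
/- For each fixed t ∈ [0,1], the Hashin–Shtrikman upper-bound function v ↦ f^HS(t;v) is continuous on the interval [0,1] (equivalently, v ↦ q(t;v) is continuous on [0,1], since the Voigt part is affine in v). -/
open Real

/-!
Write `c = Δκ`, `d = Δμ`, `D = κ⁺ + μ⁺`. On each one-sided regime, `q` differs from the interior
formula `v(1-v)(ct - ds)²/d₁` by a multiple of the square of the violated constraint
(`vct - d₂s` resp. `vds - d₃t`), so `q` is the interior formula minus two terms built from
`max 0 (·)²`. That closed form is continuous wherever `d₁, d₂, d₃ ≠ 0`, and `d₁ ≥ κ⁻ + μ⁻ > 0`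
on `[0,1]`. The two one-sided regimes cannot occur together, since `d₂ > dv` and `d₃ > cv`.
-/

open Set

section Correction

variable {c d D s t v : ℝ}

lemma sub_mul_pos_of_sub_add_mul_pos (hd : 0 ≤ d) (hv : 0 ≤ v) (h : 0 < D - (c + d) * v) :
    0 < D - c * v := by
  nlinarith [mul_nonneg hd hv]

lemma not_lt_and_lt_of_sub_add_mul_pos (hc : 0 ≤ c) (hd : 0 ≤ d) (hs : 0 ≤ s) (hv : 0 ≤ v)
    (h : 0 < D - (c + d) * v) :
    ¬((D - c * v) * s < v * c * t ∧ (D - d * v) * t < v * d * s) := by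
  rintro ⟨hct, hds⟩
  have h₂ : d * v < D - c * v := by linarith
  have h₃ : c * v < D - d * v := by linarith
  have hd₂ : 0 ≤ D - c * v := (mul_nonneg hd hv).trans h₂.le
  have hd₃ : 0 ≤ D - d * v := (mul_nonneg hc hv).trans h₃.le
  have ht : 0 < t := pos_of_mul_pos_right ((mul_nonneg hd₂ hs).trans_lt hct) (mul_nonneg hv hc)
  have hs' : 0 < s := pos_of_mul_pos_right
    ((mul_pos ((mul_nonneg hc hv).trans_lt h₃) ht).trans hds) (mul_nonneg hv hd)
  have hlt : (D - c * v) * (D - d * v) * (t * s) < (c * v) * (d * v) * (t * s) := by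
    nlinarith [mul_lt_mul'' hct hds (mul_nonneg hd₂ hs) (mul_nonneg hd₃ ht.le)]
  have hprod : (d * v) * (c * v) ≤ (D - c * v) * (D - d * v) :=
    mul_le_mul h₂.le h₃.le (mul_nonneg hc hv) hd₂
  nlinarith [mul_pos ht hs']

lemma one_sub_mul_sub_eq_div_sub_sq_div {e₁ e₂ : ℝ} (h₁ : e₁ ≠ 0) (h₂ : e₂ ≠ 0)
    (he : e₂ = e₁ + d * v) :
    (1 - v) * (v * c ^ 2 * t ^ 2 / e₂ - d * s ^ 2) =
      v * (1 - v) * (c * t - d * s) ^ 2 / e₁ - d * (1 - v) * (v * c * t - e₂ * s) ^ 2 / (e₁ * e₂) := by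
  field_simp
  rw [he]
  ring

variable (c d D s t v)

noncomputable def hsCorrectionClosedForm : ℝ :=
  v * (1 - v) * (c * t - d * s) ^ 2 / (D - (c + d) * v)
    - d * (1 - v) * max 0 (v * c * t - (D - c * v) * s) ^ 2
        / ((D - (c + d) * v) * (D - c * v))
    - c * (1 - v) * max 0 (v * d * s - (D - d * v) * t) ^ 2
        / ((D - (c + d) * v) * (D - d * v))

lemma continuousOn_hsCorrectionClosedForm {S : Set ℝ} (hc : 0 ≤ c) (hd : 0 ≤ d)
    (hS : ∀ v ∈ S, 0 ≤ v ∧ 0 < D - (c + d) * v) :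
    ContinuousOn (hsCorrectionClosedForm c d D s t) S := by
  have h₁ : ∀ v ∈ S, D - (c + d) * v ≠ 0 := fun v hv => (hS v hv).2.ne'
  have h₂ : ∀ v ∈ S, D - c * v ≠ 0 := fun v hv =>
    (sub_mul_pos_of_sub_add_mul_pos hd (hS v hv).1 (hS v hv).2).ne'
  have h₃ : ∀ v ∈ S, D - d * v ≠ 0 := fun v hv =>
    (sub_mul_pos_of_sub_add_mul_pos hc (hS v hv).1 (add_comm c d ▸ (hS v hv).2)).ne'
  unfold hsCorrectionClosedForm
  exact ((ContinuousOn.div (by fun_prop) (by fun_prop) h₁).sub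
    (ContinuousOn.div (by fun_prop) (by fun_prop) fun v hv => mul_ne_zero (h₁ v hv) (h₂ v hv))).sub
    (ContinuousOn.div (by fun_prop) (by fun_prop) fun v hv => mul_ne_zero (h₁ v hv) (h₃ v hv))

end Correction

lemma qHS_eq_hsCorrectionClosedForm {κm κp μm μp v : ℝ} (t : ℝ) (hκ : κm ≤ κp) (hμ : μm ≤ μp)
    (hv : 0 ≤ v) (h₁ : 0 < κp + μp - ((κp - κm) + (μp - μm)) * v) :
    qHS κm κp μm μp t v =
      hsCorrectionClosedForm (κp - κm) (μp - μm) (κp + μp) (sHS t) t v := by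
  have hc : 0 ≤ κp - κm := sub_nonneg.2 hκ
  have hd : 0 ≤ μp - μm := sub_nonneg.2 hμ
  have hs : 0 ≤ sHS t := Real.sqrt_nonneg _
  unfold qHS
  generalize κp - κm = c at hc h₁ ⊢
  generalize μp - μm = d at hd h₁ ⊢
  generalize κp + μp = D at h₁ ⊢
  generalize sHS t = s at hs ⊢
  have h₂ := (sub_mul_pos_of_sub_add_mul_pos hd hv h₁).ne'
  have h₃ := (sub_mul_pos_of_sub_add_mul_pos hc hv (add_comm c d ▸ h₁)).ne'
  have hexcl := not_lt_and_lt_of_sub_add_mul_pos (t := t) hc hd hs hv h₁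
  unfold hsCorrectionClosedForm
  split_ifs with hint hleft
  · rw [max_eq_left (by linarith [hint.1]), max_eq_left (by linarith [hint.2])]
    ring
  · have hright : v * d * s ≤ (D - d * v) * t := not_lt.1 fun h => hexcl ⟨hleft, h⟩
    rw [max_eq_right (by linarith), max_eq_left (by linarith)]
    linear_combination one_sub_mul_sub_eq_div_sub_sq_div (c := c) (d := d) (s := s) (t := t) (v := v)
      h₁.ne' h₂ (by ring)
  · have hright := lt_of_not_ge fun h => hint ⟨not_lt.1 hleft, h⟩
    rw [max_eq_left (by linarith), max_eq_right (by linarith)]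
    linear_combination one_sub_mul_sub_eq_div_sub_sq_div (c := d) (d := c) (s := t) (t := s) (v := v)
      h₁.ne' h₃ (by ring)

theorem hs_upper_bound_continuousOn_general
    (κm κp μm μp : ℝ) (hκm : 0 < κm) (hκ : κm < κp) (hμm : 0 < μm) (hμ : μm < μp)
    (t : ℝ) :
    ContinuousOn (fun v => fHS κm κp μm μp t v) (Set.Icc (0 : ℝ) 1) := by
  have hden : ∀ v ∈ Icc (0 : ℝ) 1, 0 ≤ v ∧ 0 < κp + μp - ((κp - κm) + (μp - μm)) * v :=
    fun v ⟨hv₀, hv₁⟩ => ⟨hv₀, by nlinarith⟩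
  have hq : ContinuousOn (qHS κm κp μm μp t) (Icc 0 1) :=
    (continuousOn_hsCorrectionClosedForm _ _ _ (sHS t) t (sub_nonneg.2 hκ.le)
      (sub_nonneg.2 hμ.le) hden).congr fun v hv =>
        qHS_eq_hsCorrectionClosedForm t hκ.le hμ.le (hden v hv).1 (hden v hv).2
  exact (Continuous.continuousOn (by fun_prop)).sub hq

/-- For each fixed `t ∈ [0,1]`, the Hashin–Shtrikman upper-bound function
`v ↦ f^HS(t;v)` is continuous on `[0,1]`. -/
theorem hs_upper_bound_continuousOn
    (κm κp μm μp : ℝ) (hκm : 0 < κm) (hκ : κm < κp) (hμm : 0 < μm) (hμ : μm < μp)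
    (t : ℝ) (ht : t ∈ Set.Icc (0 : ℝ) 1) :
    ContinuousOn (fun v => fHS κm κp μm μp t v) (Set.Icc (0 : ℝ) 1) :=
  hs_upper_bound_continuousOn_general κm κp μm μp hκm hκ hμm hμ t
end

section
/- On the second branch boundary Γ₁₃, the two adjacent branch expressions of the Hashin–Shtrikman correction coincide: if v ∈ [0,1], t ∈ [0,1], s = √(1 − t²) and v·Δμ·s = d₃(v)·t, then v·(1−v)·(Δκ·t − Δμ·s)² / d₁(v) = (1−v)·(v·Δμ²·s² / d₃(v) − Δκ·t²), and both are equal to Δμ²·v·(1−v)·s²·d₁(v) / d₃(v)². -/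
/-! On `Γ₁₃` one has `t = v·Δμ·s / d₃`, so `d₃·(Δκ·t − Δμ·s) = −Δμ·s·(d₃ − Δκ·v) = −Δμ·s·d₁`,
and likewise `v·Δμ²·s²/d₃ − Δκ·t² = v·Δμ²·s²·d₁/d₃²`. Substituting these into the two branch
expressions turns both into `Δμ²·v·(1−v)·s²·d₁/d₃²`. -/

section Boundary

variable {a b v s t d : ℝ}

theorem mul_sub_mul_eq_neg_div_of_boundary (hd : d ≠ 0) (hΓ : v * b * s = d * t) :
    a * t - b * s = -(b * s * (d - a * v) / d) := by
  field_simp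
  linear_combination -a * hΓ

theorem div_sub_mul_sq_eq_of_boundary (hd : d ≠ 0) (hΓ : v * b * s = d * t) :
    v * b ^ 2 * s ^ 2 / d - a * t ^ 2 = v * b ^ 2 * s ^ 2 * (d - a * v) / d ^ 2 := by
  field_simp
  linear_combination a * (d * t + v * b * s) * hΓ

/-- When `d - a * v = 0`, both sides are `0` through `x / 0 = 0`. -/
theorem sq_mul_sub_mul_div_eq_of_boundary (hd : d ≠ 0) (hΓ : v * b * s = d * t) :
    v * (1 - v) * (a * t - b * s) ^ 2 / (d - a * v) =
      b ^ 2 * v * (1 - v) * s ^ 2 * (d - a * v) / d ^ 2 := by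
  rw [mul_sub_mul_eq_neg_div_of_boundary hd hΓ]
  field_simp

end Boundary

theorem hs_branch_boundary_gamma13_general
    (κm κp μm μp : ℝ) (hκm : 0 < κm) (hκ : κm < κp) (hμm : 0 < μm) (hμ : μm < μp)
    (v : ℝ) (hv : v ∈ Set.Icc (0 : ℝ) 1) (t : ℝ)
    (s : ℝ)
    (hΓ : v * (μp - μm) * s = (κp + μp - (μp - μm) * v) * t) :
    v * (1 - v) * ((κp - κm) * t - (μp - μm) * s) ^ 2 /
        (κp + μp - ((κp - κm) + (μp - μm)) * v) =
      (1 - v) * (v * (μp - μm) ^ 2 * s ^ 2 / (κp + μp - (μp - μm) * v)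
        - (κp - κm) * t ^ 2) ∧
    v * (1 - v) * ((κp - κm) * t - (μp - μm) * s) ^ 2 /
        (κp + μp - ((κp - κm) + (μp - μm)) * v) =
      (μp - μm) ^ 2 * v * (1 - v) * s ^ 2 *
        (κp + μp - ((κp - κm) + (μp - μm)) * v) / (κp + μp - (μp - μm) * v) ^ 2 := by
  obtain ⟨-, hv1⟩ := hv
  set d₃ := κp + μp - (μp - μm) * v
  have hd₁_eq : κp + μp - ((κp - κm) + (μp - μm)) * v = d₃ - (κp - κm) * v := by ring
  have hd₃ : 0 < d₃ := by nlinarith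
  have hbranch := sq_mul_sub_mul_div_eq_of_boundary (a := κp - κm) hd₃.ne' hΓ
  rw [hd₁_eq]
  refine ⟨?_, hbranch⟩
  rw [hbranch, div_sub_mul_sq_eq_of_boundary (a := κp - κm) hd₃.ne' hΓ]
  ring

/-- On the branch boundary `Γ₁₃` (where `v·Δμ·s = d₃(v)·t`), the first- and
third-branch expressions of the Hashin–Shtrikman correction coincide, and both
equal `Δμ²·v·(1−v)·s²·d₁(v) / d₃(v)²`. -/
theorem hs_branch_boundary_gamma13
    (κm κp μm μp : ℝ) (hκm : 0 < κm) (hκ : κm < κp) (hμm : 0 < μm) (hμ : μm < μp)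
    (v : ℝ) (hv : v ∈ Set.Icc (0 : ℝ) 1) (t : ℝ) (ht : t ∈ Set.Icc (0 : ℝ) 1)
    (s : ℝ) (hs : s = Real.sqrt (1 - t ^ 2))
    (hΓ : v * (μp - μm) * s = (κp + μp - (μp - μm) * v) * t) :
    v * (1 - v) * ((κp - κm) * t - (μp - μm) * s) ^ 2 /
        (κp + μp - ((κp - κm) + (μp - μm)) * v) =
      (1 - v) * (v * (μp - μm) ^ 2 * s ^ 2 / (κp + μp - (μp - μm) * v)
        - (κp - κm) * t ^ 2) ∧
    v * (1 - v) * ((κp - κm) * t - (μp - μm) * s) ^ 2 /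
        (κp + μp - ((κp - κm) + (μp - μm)) * v) =
      (μp - μm) ^ 2 * v * (1 - v) * s ^ 2 *
        (κp + μp - ((κp - κm) + (μp - μm)) * v) / (κp + μp - (μp - μm) * v) ^ 2 :=
  hs_branch_boundary_gamma13_general κm κp μm μp hκm hκ hμm hμ v hv t s hΓ
end

section
/- The second and third branch regions of the Hashin–Shtrikman correction are disjoint: for all v ∈ [0,1] and t ∈ [0,1] with s = √(1 − t²), it is impossible that simultaneously v·Δκ·t > d₂(v)·s and v·Δμ·s > d₃(v)·t. -/
/-!
Write `d₂ = v·Δμ + d₁` and `d₃ = v·Δκ + d₁` with `d₁ ≥ 0`, so that `v·Δκ ≤ d₃` and `v·Δμ ≤ d₂`.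
Multiplying the two strict inequalities gives `d₂·d₃·s·t < (v·Δκ)(v·Δμ)·t·s`, which the two
bounds contradict.
-/

open Real

theorem not_lt_mul_and_lt_mul {α : Type*} [CommRing α] [LinearOrder α] [IsStrictOrderedRing α]
    {a b c d x y : α} (ha : 0 ≤ a) (hb : 0 ≤ b) (had : a ≤ d) (hbc : b ≤ c)
    (hx : 0 ≤ x) (hy : 0 ≤ y) : ¬ (c * y < a * x ∧ d * x < b * y) := by
  rintro ⟨hcy, hdx⟩
  have hab : a * b ≤ d * c := mul_le_mul had hbc hb (ha.trans had)
  have hc : 0 ≤ c := hb.trans hbc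
  have hd : 0 ≤ d := ha.trans had
  have := calc
    c * y * (d * x) < a * x * (b * y) :=
      mul_lt_mul'' hcy hdx (mul_nonneg hc hy) (mul_nonneg hd hx)
    _ = a * b * (x * y) := by ring
    _ ≤ d * c * (x * y) := mul_le_mul_of_nonneg_right hab (mul_nonneg hx hy)
    _ = c * y * (d * x) := by ring
  exact lt_irrefl _ this

/-- The second and third branch regions of the Hashin–Shtrikman correction are
disjoint: it is impossible that simultaneously `v·Δκ·t > d₂(v)·s` and
`v·Δμ·s > d₃(v)·t`. -/
theorem hs_branches_disjoint
    (κm κp μm μp : ℝ) (hκm : 0 < κm) (hκ : κm < κp) (hμm : 0 < μm) (hμ : μm < μp)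
    (v : ℝ) (hv : v ∈ Set.Icc (0 : ℝ) 1) (t : ℝ) (ht : t ∈ Set.Icc (0 : ℝ) 1)
    (s : ℝ) (hs : s = Real.sqrt (1 - t ^ 2)) :
    ¬ (v * (κp - κm) * t > (κp + μp - (κp - κm) * v) * s ∧
       v * (μp - μm) * s > (κp + μp - (μp - μm) * v) * t) := by
  obtain ⟨hv0, hv1⟩ := hv
  have hd₁ : 0 ≤ κp + μp - ((κp - κm) + (μp - μm)) * v := by
    have : κp + μp - ((κp - κm) + (μp - μm)) * v = (1 - v) * (κp + μp) + v * (κm + μm) := by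
      ring
    rw [this]
    exact add_nonneg (mul_nonneg (by linarith) (by linarith)) (mul_nonneg hv0 (by linarith))
  exact not_lt_mul_and_lt_mul (mul_nonneg hv0 (by linarith)) (mul_nonneg hv0 (by linarith))
    (by linarith) (by linarith) ht.1 (hs ▸ Real.sqrt_nonneg _)
end

section
/- For each fixed t ∈ [0,1], the Hashin–Shtrikman upper-bound function v ↦ f^HS(t;v) is nondecreasing on the interval [0,1]. -/
open Real

/-!
Write `a = Δκ`, `b = Δμ`, `S = κ⁺ + μ⁺` and `s = √(1 - t²)`, so that
`f^HS(t; v) = κ⁻t² + μ⁻s² + v (a t² + b s²) - q(t; v)`. By partial fractions in `v`, each of the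
three branches of `v (a t² + b s²) - q` is an affine function of nonnegative slope plus a
nonnegative multiple of `1 / (S - c v)` with `0 ≤ c < S`, hence nondecreasing on `[0, 1]`.
The two outer regimes read `S s < v a (t + s)` and `S t < v b (t + s)`: they are upward closed
in `v`, disjoint since `a + b < S`, and exchanged by the symmetry `(a, t) ↔ (b, s)` of `q`.
The interior branch of `f^HS` lies below both outer ones, so along `u ≤ v` the only possible
change of branch is from the interior to an outer one, which can only increase the value.
-/

open Set

noncomputable def hsCorrection₁ (a b S t s v : ℝ) : ℝ :=
  v * (1 - v) * (a * t - b * s) ^ 2 / (S - (a + b) * v)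

noncomputable def hsCorrection₂ (a b S t s v : ℝ) : ℝ :=
  (1 - v) * (v * a ^ 2 * t ^ 2 / (S - a * v) - b * s ^ 2)

noncomputable def hsCorrection (a b S t s v : ℝ) : ℝ :=
  if v * a * t ≤ (S - a * v) * s ∧ v * b * s ≤ (S - b * v) * t then hsCorrection₁ a b S t s v
  else if (S - a * v) * s < v * a * t then hsCorrection₂ a b S t s v
  else hsCorrection₂ b a S s t v

theorem monotoneOn_div_sub_mul {k c S : ℝ} (hk : 0 ≤ k) (hc : 0 ≤ c) :
    MonotoneOn (fun v => k / (S - c * v)) {v | c * v < S} := fun _ _ _ hv huv =>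
  div_le_div_of_nonneg_left hk (sub_pos.2 hv)
    (sub_le_sub_left (mul_le_mul_of_nonneg_left huv hc) S)

theorem hsCorrection₁_comm (a b S t s v : ℝ) :
    hsCorrection₁ b a S s t v = hsCorrection₁ a b S t s v := by
  unfold hsCorrection₁
  ring

theorem mul_sub_hsCorrection₁_eq {a b S t s v : ℝ} (hab : a + b ≠ 0) (hv : S - (a + b) * v ≠ 0) :
    v * (a * t ^ 2 + b * s ^ 2) - hsCorrection₁ a b S t s v =
      -((a * t - b * s) ^ 2 * (S - (a + b)) / (a + b) ^ 2) +
        (a * b * (t + s) ^ 2 / (a + b) * v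
          + (a * t - b * s) ^ 2 * S * (S - (a + b)) / (a + b) ^ 2 / (S - (a + b) * v)) := by
  -- `field_simp` normalizes the denominator to this form
  have : S - v * (a + b) ≠ 0 := by rwa [mul_comm]
  unfold hsCorrection₁
  field_simp
  ring

theorem mul_sub_hsCorrection₂_eq {a b S t s v : ℝ} (hv : S - a * v ≠ 0) :
    v * (a * t ^ 2 + b * s ^ 2) - hsCorrection₂ a b S t s v =
      b * s ^ 2 - (S - a) * t ^ 2 + S * (S - a) * t ^ 2 / (S - a * v) := by
  have : S - v * a ≠ 0 := by rwa [mul_comm]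
  unfold hsCorrection₂
  field_simp
  ring

theorem monotoneOn_mul_sub_hsCorrection₁ {a b S : ℝ} (ha : 0 < a) (hb : 0 < b) (hS : a + b ≤ S)
    (t s : ℝ) :
    MonotoneOn (fun v => v * (a * t ^ 2 + b * s ^ 2) - hsCorrection₁ a b S t s v)
      {v | (a + b) * v < S} := by
  have hab : 0 < a + b := add_pos ha hb
  have hS₀ : 0 ≤ S := hab.le.trans hS
  have hSab : 0 ≤ S - (a + b) := sub_nonneg.2 hS
  have hslope : 0 ≤ a * b * (t + s) ^ 2 / (a + b) := by positivity
  have hpole : 0 ≤ (a * t - b * s) ^ 2 * S * (S - (a + b)) / (a + b) ^ 2 := by positivity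
  exact ((((monotone_mul_left_of_nonneg hslope).monotoneOn _).add
    (monotoneOn_div_sub_mul hpole hab.le)).const_add _).congr fun v hv =>
      (mul_sub_hsCorrection₁_eq hab.ne' (sub_pos.2 hv).ne').symm

theorem monotoneOn_mul_sub_hsCorrection₂ {a S : ℝ} (ha : 0 ≤ a) (hS : a ≤ S) (b t s : ℝ) :
    MonotoneOn (fun v => v * (a * t ^ 2 + b * s ^ 2) - hsCorrection₂ a b S t s v)
      {v | a * v < S} := by
  have hS₀ : 0 ≤ S := ha.trans hS
  have hSa : 0 ≤ S - a := sub_nonneg.2 hS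
  have hpole : 0 ≤ S * (S - a) * t ^ 2 := by positivity
  exact ((monotoneOn_div_sub_mul hpole ha).const_add _).congr fun v hv =>
    (mul_sub_hsCorrection₂_eq (sub_pos.2 hv).ne').symm

theorem hsCorrection₂_le_hsCorrection₁ {a b S t s v : ℝ} (hb : 0 ≤ b) (hv : v ≤ 1)
    (h₁ : (a + b) * v < S) (h₂ : a * v < S) :
    hsCorrection₂ a b S t s v ≤ hsCorrection₁ a b S t s v := by
  have h₁' : 0 < S - (a + b) * v := sub_pos.2 h₁
  have h₂' : 0 < S - a * v := sub_pos.2 h₂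
  have : S - v * (a + b) ≠ 0 := by rw [mul_comm]; exact h₁'.ne'
  have : S - v * a ≠ 0 := by rw [mul_comm]; exact h₂'.ne'
  have key : hsCorrection₁ a b S t s v - hsCorrection₂ a b S t s v =
      (1 - v) * b * (s * (S - a * v) - a * t * v) ^ 2 / ((S - (a + b) * v) * (S - a * v)) := by
    unfold hsCorrection₁ hsCorrection₂
    field_simp
    ring
  have : 0 ≤ 1 - v := sub_nonneg.2 hv
  rw [← sub_nonneg, key]
  positivity

theorem hs_saturation_mono {a S t s u v : ℝ} (ha : 0 ≤ a) (ht : 0 ≤ t) (hs : 0 ≤ s)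
    (huv : u ≤ v) (h : (S - a * u) * s < u * a * t) : (S - a * v) * s < v * a * t := by
  nlinarith [mul_le_mul_of_nonneg_right huv (mul_nonneg ha (add_nonneg ht hs))]

theorem hs_saturation_disjoint {a b S t s v : ℝ} (ha : 0 ≤ a) (hb : 0 ≤ b) (hS : a + b ≤ S)
    (ht : 0 ≤ t) (hs : 0 ≤ s) (hv : v ≤ 1) (h : (S - a * v) * s < v * a * t) :
    ¬ (S - b * v) * t < v * b * s := by
  nlinarith [mul_nonneg (mul_nonneg (sub_nonneg.2 hv) (add_nonneg ha hb)) (add_nonneg ht hs),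
    mul_nonneg (sub_nonneg.2 hS) (add_nonneg ht hs)]

theorem hsCorrection_comm {a b S t s v : ℝ} (ha : 0 ≤ a) (hb : 0 ≤ b) (hS : a + b ≤ S)
    (ht : 0 ≤ t) (hs : 0 ≤ s) (hv : v ≤ 1) :
    hsCorrection b a S s t v = hsCorrection a b S t s v := by
  have hdisj := hs_saturation_disjoint ha hb hS ht hs hv
  unfold hsCorrection
  simp only [← not_lt]
  split_ifs <;> first | rfl | exact hsCorrection₁_comm .. | tauto

theorem hsCorrection₂_le_hsCorrection {a b S t s v : ℝ} (hb : 0 ≤ b) (hv : v ≤ 1)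
    (h₁ : (a + b) * v < S) (h₂ : a * v < S) (h : v * b * s ≤ (S - b * v) * t) :
    hsCorrection₂ a b S t s v ≤ hsCorrection a b S t s v := by
  unfold hsCorrection
  split_ifs with hreg₁ hreg₂
  · exact hsCorrection₂_le_hsCorrection₁ hb hv h₁ h₂
  · exact le_rfl
  · exact absurd ⟨not_lt.1 hreg₂, h⟩ hreg₁

theorem mul_sub_hsCorrection_le_of_saturation {a b S t s u v : ℝ} (ha : 0 < a) (hb : 0 < b)
    (hS : a + b < S) (ht : 0 ≤ t) (hs : 0 ≤ s) (huv : u ≤ v) (hv : v ≤ 1)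
    (h : (S - a * v) * s < v * a * t) :
    u * (a * t ^ 2 + b * s ^ 2) - hsCorrection a b S t s u ≤
      v * (a * t ^ 2 + b * s ^ 2) - hsCorrection a b S t s v := by
  have hu : u ≤ 1 := huv.trans hv
  have hSa : a < S := by linarith
  have hau : a * u < S := (mul_le_of_le_one_right ha.le hu).trans_lt hSa
  have hav : a * v < S := (mul_le_of_le_one_right ha.le hv).trans_lt hSa
  have habu : (a + b) * u < S := (mul_le_of_le_one_right (add_pos ha hb).le hu).trans_lt hS
  have hu₃ : u * b * s ≤ (S - b * u) * t := not_lt.1 fun h₃ =>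
    hs_saturation_disjoint ha.le hb.le hS.le ht hs hv h (hs_saturation_mono hb.le hs ht huv h₃)
  calc _ ≤ u * (a * t ^ 2 + b * s ^ 2) - hsCorrection₂ a b S t s u :=
        sub_le_sub_left (hsCorrection₂_le_hsCorrection hb.le hu habu hau hu₃) _
    _ ≤ v * (a * t ^ 2 + b * s ^ 2) - hsCorrection₂ a b S t s v :=
        monotoneOn_mul_sub_hsCorrection₂ ha.le hSa.le b t s hau hav huv
    _ = _ := by rw [hsCorrection, if_neg fun h' => h.not_ge h'.1, if_pos h]

theorem monotoneOn_mul_sub_hsCorrection {a b S t s : ℝ} (ha : 0 < a) (hb : 0 < b)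
    (hS : a + b < S) (ht : 0 ≤ t) (hs : 0 ≤ s) :
    MonotoneOn (fun v => v * (a * t ^ 2 + b * s ^ 2) - hsCorrection a b S t s v) (Icc 0 1) := by
  intro u _ v hv huv
  dsimp only
  by_cases h₂ : (S - a * v) * s < v * a * t
  · exact mul_sub_hsCorrection_le_of_saturation ha hb hS ht hs huv hv.2 h₂
  by_cases h₃ : (S - b * v) * t < v * b * s
  · have := mul_sub_hsCorrection_le_of_saturation hb ha (by linarith) hs ht huv hv.2 h₃
    rwa [hsCorrection_comm ha.le hb.le hS.le ht hs (huv.trans hv.2),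
      hsCorrection_comm ha.le hb.le hS.le ht hs hv.2, add_comm (b * s ^ 2)] at this
  have h₁u : u * a * t ≤ (S - a * u) * s ∧ u * b * s ≤ (S - b * u) * t :=
    ⟨not_lt.1 fun h => h₂ (hs_saturation_mono ha.le ht hs huv h),
      not_lt.1 fun h => h₃ (hs_saturation_mono hb.le hs ht huv h)⟩
  rw [hsCorrection, if_pos h₁u, hsCorrection, if_pos ⟨not_lt.1 h₂, not_lt.1 h₃⟩]
  have hab := (add_pos ha hb).le
  exact monotoneOn_mul_sub_hsCorrection₁ ha hb hS.le t s
    ((mul_le_of_le_one_right hab (huv.trans hv.2)).trans_lt hS)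
    ((mul_le_of_le_one_right hab hv.2).trans_lt hS) huv
/-- For each fixed `t ∈ [0,1]`, the Hashin–Shtrikman upper-bound function
`v ↦ f^HS(t;v)` is nondecreasing on `[0,1]`. -/
theorem hs_upper_bound_monotoneOn
    (κm κp μm μp : ℝ) (hκm : 0 < κm) (hκ : κm < κp) (hμm : 0 < μm) (hμ : μm < μp)
    (t : ℝ) (ht : t ∈ Set.Icc (0 : ℝ) 1) :
    MonotoneOn (fun v => fHS κm κp μm μp t v) (Set.Icc (0 : ℝ) 1) := by
  obtain ⟨ht₀, ht₁⟩ := ht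
  have hs : sHS t ^ 2 = 1 - t ^ 2 := Real.sq_sqrt (by nlinarith)
  have hq : ∀ v, qHS κm κp μm μp t v =
      hsCorrection (κp - κm) (μp - μm) (κp + μp) t (sHS t) v := fun _ => rfl
  have hmono := monotoneOn_mul_sub_hsCorrection (S := κp + μp) (s := sHS t)
    (sub_pos.2 hκ) (sub_pos.2 hμ) (by linarith) ht₀ (Real.sqrt_nonneg _)
  refine (hmono.const_add (κm * t ^ 2 + μm * (1 - t ^ 2))).congr fun v _ => ?_
  simp only [fHS, hq, hs]
  ring
end

section
/- Fix t ∈ [0,1] and a real c with κ⁻·t² + μ⁻·(1 − t²) ≤ c ≤ κ⁺·t² + μ⁺·(1 − t²). Then there exists v̂ ∈ [0,1] such that f^HS(t;v̂) = c and the feasibility set in the volume fraction is exactly the interval {v ∈ [0,1] : c ≤ f^HS(t;v)} = [v̂, 1]. -/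
open Real

/-!
For fixed `t`, the map `v ↦ f^HS(t; v)` is continuous and nondecreasing on `[0, 1]`, running from
`κ⁻t² + μ⁻(1 - t²)` at `v = 0` to `κ⁺t² + μ⁺(1 - t²)` at `v = 1`. Hence the least `v̂` with
`c ≤ f^HS(t; v̂)` satisfies `f^HS(t; v̂) = c` (intermediate value theorem on `[0, v̂]`), and the
feasible set is `[v̂, 1]`.

Since `Δκ + Δμ < κ⁺ + μ⁺`, at most one of the two constraints in `q` becomes active as `v` grows,
and it stays active from some `w` on (for the first one, `w = (κ⁺ + μ⁺) s / (Δκ (t + s))`); the two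
formulas for `q` agree at `w`. In the unconstrained regime the difference quotient of `f^HS` is
nonnegative because `(Δκ t - Δμ s)² ≤ (Δκ + Δμ)(Δκ t² + Δμ s²)` and `Δκ + Δμ < κ⁺ + μ⁺`; in a
constrained regime `f^HS` is an increasing Möbius function of `v`. The second constrained regime is
the first one with `(κ, t)` and `(μ, s)` exchanged.
-/

open Set

section IntermediateValue

variable {α δ : Type*} [ConditionallyCompleteLinearOrder α] [TopologicalSpace α]
  [OrderTopology α] [DenselyOrdered α] [LinearOrder δ] [TopologicalSpace δ]
  [OrderClosedTopology δ]

theorem MonotoneOn.exists_eq_and_setOf_le_eq_Icc {f : α → δ} {a b : α} {c : δ}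
    (hmono : MonotoneOn f (Icc a b)) (hab : a ≤ b) (hf : ContinuousOn f (Icc a b))
    (ha : f a ≤ c) (hb : c ≤ f b) :
    ∃ x ∈ Icc a b, f x = c ∧ {v | v ∈ Icc a b ∧ c ≤ f v} = Icc x b := by
  set S := {v | v ∈ Icc a b ∧ c ≤ f v}
  have hS : IsClosed S := hf.preimage_isClosed_of_isClosed isClosed_Icc isClosed_Ici
  have hbdd : BddBelow S := ⟨a, fun v hv => hv.1.1⟩
  obtain ⟨⟨hax, hxb⟩, hcx⟩ : sInf S ∈ S := hS.csInf_mem ⟨b, ⟨hab, le_rfl⟩, hb⟩ hbdd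
  obtain ⟨y, ⟨hay, hyx⟩, hyc⟩ :=
    intermediate_value_Icc hax (hf.mono (Icc_subset_Icc_right hxb)) ⟨ha, hcx⟩
  have hxy : sInf S ≤ y := csInf_le hbdd ⟨⟨hay, hyx.trans hxb⟩, hyc.ge⟩
  refine ⟨sInf S, ⟨hax, hxb⟩, le_antisymm hyx hxy ▸ hyc, ?_⟩
  ext v
  exact ⟨fun hv => ⟨csInf_le hbdd hv, hv.1.2⟩, fun ⟨hxv, hvb⟩ =>
    ⟨⟨hax.trans hxv, hvb⟩, hcx.trans (hmono ⟨hax, hxb⟩ ⟨hax.trans hxv, hvb⟩ hxv)⟩⟩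

end IntermediateValue

namespace HashinShtrikman

noncomputable def corr₁ (A B K t s v : ℝ) : ℝ :=
  v * (1 - v) * (A * t - B * s) ^ 2 / (K - (A + B) * v)

noncomputable def corr₂ (A B K t s v : ℝ) : ℝ :=
  (1 - v) * (v * A ^ 2 * t ^ 2 / (K - A * v) - B * s ^ 2)

/-- `qHS` with `Δκ`, `Δμ`, `κ⁺ + μ⁺` and `√(1 - t²)` replaced by independent parameters
`A`, `B`, `K` and `s`; its third regime is the second one with `(A, t)` and `(B, s)` exchanged. -/
noncomputable def corr (A B K t s v : ℝ) : ℝ :=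
  if v * A * t ≤ (K - A * v) * s ∧ v * B * s ≤ (K - B * v) * t then corr₁ A B K t s v
  else if (K - A * v) * s < v * A * t then corr₂ A B K t s v
  else corr₂ B A K s t v

def voigt (κ μ A B t s v : ℝ) : ℝ := (κ + v * A) * t ^ 2 + (μ + v * B) * s ^ 2

noncomputable def energy (κ μ A B K t s : ℝ) : ℝ → ℝ := voigt κ μ A B t s - corr A B K t s

theorem fHS_eq_energy (κm κp μm μp : ℝ) {t : ℝ} (hs : sHS t ^ 2 = 1 - t ^ 2) :
    fHS κm κp μm μp t = energy κm μm (κp - κm) (μp - μm) (κp + μp) t (sHS t) := by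
  funext v
  rw [energy, Pi.sub_apply, voigt, hs]
  rfl

variable {κ μ A B K t s v : ℝ}

theorem sub_mul_pos_of_mem_Icc {C : ℝ} (hC : 0 ≤ C) (hCK : C < K) (hv : v ∈ Icc 0 1) :
    0 < K - C * v := by
  nlinarith [hv.1, hv.2]

theorem corr_of_le (h₁ : v * A * (t + s) ≤ K * s) (h₂ : v * B * (t + s) ≤ K * t) :
    corr A B K t s v = corr₁ A B K t s v :=
  if_pos ⟨by linarith, by linarith⟩

theorem corr_of_lt (h : K * s < v * A * (t + s)) : corr A B K t s v = corr₂ A B K t s v := by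
  rw [corr, if_neg fun h' => by linarith [h'.1], if_pos (by linarith)]

theorem corr₁_comm : corr₁ A B K t s v = corr₁ B A K s t v := by
  unfold corr₁; ring

theorem corr_comm (hA : 0 ≤ A) (hB : 0 ≤ B) (hK : A + B < K) (ht : 0 ≤ t) (hs : 0 ≤ s)
    (hv : v ∈ Icc 0 1) : corr A B K t s v = corr B A K s t v := by
  have hnot_both : ¬ ((K - A * v) * s < v * A * t ∧ (K - B * v) * t < v * B * s) := by
    rintro ⟨h₁, h₂⟩
    nlinarith [mul_le_mul_of_nonneg_left hv.2 (mul_nonneg (add_nonneg hA hB) (add_nonneg ht hs))]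
  unfold corr
  split_ifs <;> first | rfl | exact corr₁_comm | (exfalso; tauto) | (simp only [not_lt] at *; tauto)

theorem corr₁_eq_corr₂ (hA : 0 ≤ A) (hB : 0 ≤ B) (hK : A + B < K) (hv : v ∈ Icc 0 1)
    (h : v * A * (t + s) = K * s) : corr₁ A B K t s v = corr₂ A B K t s v := by
  have h₁ : corr₁ A B K t s v = (1 - v) * s * (A * t - B * s) := by
    rw [corr₁, div_eq_iff (sub_mul_pos_of_mem_Icc (add_nonneg hA hB) hK hv).ne']
    linear_combination (1 - v) * (A * t - B * s) * h
  have h₂ : v * A ^ 2 * t ^ 2 / (K - A * v) = A * t * s := by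
    rw [div_eq_iff (sub_mul_pos_of_mem_Icc hA (by linarith) hv).ne']
    linear_combination A * t * h
  rw [h₁, corr₂, h₂]
  ring

theorem corr_one : corr A B K t s 1 = 0 := by
  unfold corr corr₁ corr₂
  split_ifs <;> simp

theorem continuous_voigt : Continuous (voigt κ μ A B t s) := by
  unfold voigt; fun_prop

theorem continuousOn_corr₁ (hA : 0 ≤ A) (hB : 0 ≤ B) (hK : A + B < K) :
    ContinuousOn (corr₁ A B K t s) (Icc 0 1) := by
  unfold corr₁
  exact ContinuousOn.div (by fun_prop) (by fun_prop)
    fun v hv => (sub_mul_pos_of_mem_Icc (add_nonneg hA hB) hK hv).ne'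

theorem continuousOn_corr₂ (hA : 0 ≤ A) (hK : A < K) :
    ContinuousOn (corr₂ A B K t s) (Icc 0 1) := by
  unfold corr₂
  exact ContinuousOn.mul (by fun_prop) <| ContinuousOn.sub (ContinuousOn.div (by fun_prop)
    (by fun_prop) fun v hv => (sub_mul_pos_of_mem_Icc hA hK hv).ne') (by fun_prop)

theorem monotoneOn_mul_sub_mul_div {P Q C : ℝ} (hP : 0 ≤ P) (hQ : 0 ≤ Q) (hQP : Q ≤ C * P)
    (hC : 0 ≤ C) (hCK : C < K) :
    MonotoneOn (fun v => v * P - v * (1 - v) * Q / (K - C * v)) (Icc 0 1) := by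
  intro u hu v hv huv
  have hDu := sub_mul_pos_of_mem_Icc hC hCK hu
  have hDv := sub_mul_pos_of_mem_Icc hC hCK hv
  have key : (v * P - v * (1 - v) * Q / (K - C * v)) - (u * P - u * (1 - u) * Q / (K - C * u))
      = (v - u) * (P * ((K - C * u) * (K - C * v)) - Q * (K * (1 - u - v) + C * u * v))
        / ((K - C * u) * (K - C * v)) := by
    have : K - u * C ≠ 0 := by linarith
    have : K - v * C ≠ 0 := by linarith
    field_simp
    ring
  have hslope : Q * (K * (1 - u - v) + C * u * v) ≤ P * ((K - C * u) * (K - C * v)) := by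
    rcases le_total 0 (K * (1 - u - v) + C * u * v) with hN | hN
    · nlinarith [mul_le_mul_of_nonneg_right hQP hN, mul_nonneg hP (mul_nonneg hDu.le hDv.le),
        mul_nonneg hP (mul_nonneg (hC.trans hCK.le) (sub_nonneg.2 hCK.le))]
    · nlinarith [mul_nonpos_of_nonneg_of_nonpos hQ hN, mul_nonneg hP (mul_nonneg hDu.le hDv.le)]
  have : 0 ≤ (v - u) * (P * ((K - C * u) * (K - C * v)) - Q * (K * (1 - u - v) + C * u * v))
      / ((K - C * u) * (K - C * v)) :=
    div_nonneg (mul_nonneg (sub_nonneg.2 huv) (sub_nonneg.2 hslope)) (mul_pos hDu hDv).le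
  dsimp only
  linarith

theorem monotoneOn_voigt_sub_corr₁ (hA : 0 ≤ A) (hB : 0 ≤ B) (hK : A + B < K) :
    MonotoneOn (voigt κ μ A B t s - corr₁ A B K t s) (Icc 0 1) := by
  -- `(A + B) (A t² + B s²) - (A t - B s)² = A B (t + s)²`
  have hQP : (A * t - B * s) ^ 2 ≤ (A + B) * (A * t ^ 2 + B * s ^ 2) := by
    nlinarith [mul_nonneg (mul_nonneg hA hB) (sq_nonneg (t + s))]
  intro u hu v hv huv
  have := monotoneOn_mul_sub_mul_div (by positivity) (sq_nonneg _) hQP (add_nonneg hA hB) hK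
    hu hv huv
  simp only [Pi.sub_apply, voigt, corr₁] at this ⊢
  linarith

theorem monotoneOn_voigt_sub_corr₂ (hA : 0 ≤ A) (hK : A < K) :
    MonotoneOn (voigt κ μ A B t s - corr₂ A B K t s) (Icc 0 1) := by
  have key : ∀ v ∈ Icc (0 : ℝ) 1, (voigt κ μ A B t s - corr₂ A B K t s) v
      = κ * t ^ 2 + (μ + B) * s ^ 2 + A * (K - A) * t ^ 2 * (v / (K - A * v)) := by
    intro v hv
    have : K - v * A ≠ 0 := by linarith [sub_mul_pos_of_mem_Icc hA hK hv]
    simp only [Pi.sub_apply, voigt, corr₂]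
    field_simp
    ring
  intro u hu v hv huv
  rw [key u hu, key v hv]
  have hDu := sub_mul_pos_of_mem_Icc hA hK hu
  have hDv := sub_mul_pos_of_mem_Icc hA hK hv
  have : u / (K - A * u) ≤ v / (K - A * v) := by
    rw [div_le_div_iff₀ hDu hDv]
    nlinarith [hu.1, mul_le_mul_of_nonneg_left huv hA]
  have : 0 ≤ A * (K - A) * t ^ 2 := mul_nonneg (mul_nonneg hA (sub_nonneg.2 hK.le)) (sq_nonneg t)
  gcongr

theorem energy_comm (hA : 0 ≤ A) (hB : 0 ≤ B) (hK : A + B < K) (ht : 0 ≤ t) (hs : 0 ≤ s) :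
    EqOn (energy κ μ A B K t s) (energy μ κ B A K s t) (Icc 0 1) := fun v hv => by
  simp only [energy, Pi.sub_apply, voigt, corr_comm hA hB hK ht hs hv]
  ring

theorem eqOn_energy_of_le {w : ℝ} (hA : 0 ≤ A) (hB : 0 ≤ B) (ht : 0 ≤ t) (hs : 0 ≤ s)
    (hw₁ : w * A * (t + s) ≤ K * s) (hw₂ : w * B * (t + s) ≤ K * t) :
    EqOn (energy κ μ A B K t s) (voigt κ μ A B t s - corr₁ A B K t s) (Icc 0 w) :=
  fun v ⟨hv₀, hvw⟩ => by
    have hts : 0 ≤ t + s := add_nonneg ht hs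
    rw [energy, Pi.sub_apply, Pi.sub_apply, corr_of_le
      (by nlinarith [mul_le_mul_of_nonneg_right hvw (mul_nonneg hA hts)])
      (by nlinarith [mul_le_mul_of_nonneg_right hvw (mul_nonneg hB hts)])]

theorem continuousOn_and_monotoneOn_energy_of_lt (hA : 0 ≤ A) (hB : 0 ≤ B) (hK : A + B < K)
    (ht : 0 ≤ t) (hs : 0 ≤ s) (h : K * s < A * (t + s)) :
    ContinuousOn (energy κ μ A B K t s) (Icc 0 1) ∧ MonotoneOn (energy κ μ A B K t s) (Icc 0 1) := by
  have hpos : 0 < A * (t + s) := (mul_nonneg (by linarith) hs).trans_lt h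
  set w := K * s / (A * (t + s))
  have hw : w * (A * (t + s)) = K * s := div_mul_cancel₀ _ hpos.ne'
  have hw₀ : 0 ≤ w := div_nonneg (mul_nonneg (by linarith) hs) hpos.le
  have hw₁ : w ≤ 1 := (div_le_one hpos).2 h.le
  have h₁ := eqOn_energy_of_le (κ := κ) (μ := μ) (K := K) (w := w) hA hB ht hs (by linarith) (by
    nlinarith [mul_le_mul_of_nonneg_right hw₁ (mul_nonneg hB (add_nonneg ht hs)),
      mul_nonneg (by linarith : 0 ≤ K - A - B) (add_nonneg ht hs)])
  have h₂ : EqOn (energy κ μ A B K t s) (voigt κ μ A B t s - corr₂ A B K t s) (Icc w 1) := by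
    rintro v ⟨hwv, hv₁⟩
    rcases hwv.eq_or_lt with rfl | hwv
    · rw [h₁ ⟨hw₀, le_rfl⟩, Pi.sub_apply, Pi.sub_apply,
        corr₁_eq_corr₂ hA hB hK ⟨hw₀, hw₁⟩ (by linarith)]
    · rw [energy, Pi.sub_apply, Pi.sub_apply, corr_of_lt (by nlinarith)]
  have hIcc : Icc (0 : ℝ) 1 = Icc 0 w ∪ Icc w 1 := (Icc_union_Icc_eq_Icc hw₀ hw₁).symm
  rw [hIcc]
  constructor
  · refine ContinuousOn.union_of_isClosed ?_ ?_ isClosed_Icc isClosed_Icc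
    · exact (continuous_voigt.continuousOn.sub (continuousOn_corr₁ hA hB hK)).mono
        (Icc_subset_Icc_right hw₁) |>.congr h₁
    · exact (continuous_voigt.continuousOn.sub (continuousOn_corr₂ hA (by linarith))).mono
        (Icc_subset_Icc_left hw₀) |>.congr h₂
  · refine MonotoneOn.union_right ?_ ?_ (isGreatest_Icc hw₀) (isLeast_Icc hw₁)
    · exact ((monotoneOn_voigt_sub_corr₁ hA hB hK).mono (Icc_subset_Icc_right hw₁)).congr h₁.symm
    · exact ((monotoneOn_voigt_sub_corr₂ hA (by linarith)).mono
        (Icc_subset_Icc_left hw₀)).congr h₂.symm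

theorem continuousOn_and_monotoneOn_energy (κ μ : ℝ) (hA : 0 ≤ A) (hB : 0 ≤ B) (hK : A + B < K)
    (ht : 0 ≤ t) (hs : 0 ≤ s) :
    ContinuousOn (energy κ μ A B K t s) (Icc 0 1) ∧ MonotoneOn (energy κ μ A B K t s) (Icc 0 1) := by
  by_cases hAts : K * s < A * (t + s)
  · exact continuousOn_and_monotoneOn_energy_of_lt hA hB hK ht hs hAts
  by_cases hBts : K * t < B * (t + s)
  · obtain ⟨hc, hm⟩ := continuousOn_and_monotoneOn_energy_of_lt (κ := μ) (μ := κ) (K := K) hB hA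
      (by linarith) hs ht (by linarith)
    exact ⟨hc.congr (energy_comm hA hB hK ht hs), hm.congr (energy_comm hA hB hK ht hs).symm⟩
  have h₁ := eqOn_energy_of_le (κ := κ) (μ := μ) (K := K) (w := 1) hA hB ht hs (by linarith)
    (by linarith)
  exact ⟨(continuous_voigt.continuousOn.sub (continuousOn_corr₁ hA hB hK)).congr h₁,
    (monotoneOn_voigt_sub_corr₁ hA hB hK).congr h₁.symm⟩

theorem energy_zero (hK : 0 ≤ K) (ht : 0 ≤ t) (hs : 0 ≤ s) :
    energy κ μ A B K t s 0 = κ * t ^ 2 + μ * s ^ 2 := by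
  rw [energy, Pi.sub_apply, corr_of_le (by simpa using mul_nonneg hK hs)
    (by simpa using mul_nonneg hK ht)]
  simp [voigt, corr₁]

theorem energy_one : energy κ μ A B K t s 1 = (κ + A) * t ^ 2 + (μ + B) * s ^ 2 := by
  simp [energy, voigt, corr_one]

end HashinShtrikman

open HashinShtrikman

/-- For fixed `t ∈ [0,1]` and any `c` between the pure-phase energies, there is
an activating volume fraction `v̂ ∈ [0,1]` with `f^HS(t;v̂) = c`, and the
feasibility set in the volume fraction is exactly the interval `[v̂, 1]`. -/
theorem hs_feasibility_interval
    (κm κp μm μp : ℝ) (hκm : 0 < κm) (hκ : κm < κp) (hμm : 0 < μm) (hμ : μm < μp)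
    (t : ℝ) (ht : t ∈ Set.Icc (0 : ℝ) 1) (c : ℝ)
    (hc₁ : κm * t ^ 2 + μm * (1 - t ^ 2) ≤ c)
    (hc₂ : c ≤ κp * t ^ 2 + μp * (1 - t ^ 2)) :
    ∃ vhat ∈ Set.Icc (0 : ℝ) 1, fHS κm κp μm μp t vhat = c ∧
      {v : ℝ | v ∈ Set.Icc (0 : ℝ) 1 ∧ c ≤ fHS κm κp μm μp t v} = Set.Icc vhat 1 := by
  obtain ⟨ht₀, ht₁⟩ := ht
  have hs : sHS t ^ 2 = 1 - t ^ 2 := Real.sq_sqrt (by nlinarith)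
  have hf := fHS_eq_energy κm κp μm μp hs
  have hs₀ : 0 ≤ sHS t := Real.sqrt_nonneg _
  obtain ⟨hcont, hmono⟩ := continuousOn_and_monotoneOn_energy κm μm (K := κp + μp)
    (sub_pos.2 hκ).le (sub_pos.2 hμ).le (by linarith) ht₀ hs₀
  rw [← hf] at hcont hmono
  refine hmono.exists_eq_and_setOf_le_eq_Icc zero_le_one hcont ?_ ?_
  · rw [hf, energy_zero (by linarith) ht₀ hs₀, hs]
    exact hc₁
  · rw [hf, energy_one, hs]
    linarith
end

section
/- Closed form of the activating volume on the second branch: let t ∈ [0,1], s = √(1 − t²), v ∈ [0,1] and c ∈ ℝ. If v·Δκ·t > d₂(v)·s and f^HS(t;v) = c, then c ≠ μ⁺·(1 − 2t²) and v = ((κ⁺ + μ⁺)/Δκ) · (1 − t²·(κ⁻ + μ⁺) / (c − μ⁺·(1 − 2t²))). -/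
open Real

lemma qHS_of_branch2 {κm κp μm μp t v : ℝ}
    (h : (κp + μp - (κp - κm) * v) * sHS t < v * (κp - κm) * t) :
    qHS κm κp μm μp t v =
      (1 - v) * (v * (κp - κm) ^ 2 * t ^ 2 / (κp + μp - (κp - κm) * v)
        - (μp - μm) * sHS t ^ 2) := by
  rw [qHS, if_neg fun h' => h.not_ge h'.1, if_pos h]

/-- On the second branch the shear terms of the Voigt energy and of `q` combine to `μ⁺ (1 - t²)`,
and `(κ⁻ + μ⁺ + v Δκ) d₂(v) - v (1 - v) Δκ² = (κ⁻ + μ⁺)(κ⁺ + μ⁺)`. -/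
lemma fHS_of_branch2 {κm κp μm μp t v : ℝ} (ht : t ^ 2 ≤ 1)
    (hd : κp + μp - (κp - κm) * v ≠ 0)
    (h : (κp + μp - (κp - κm) * v) * sHS t < v * (κp - κm) * t) :
    fHS κm κp μm μp t v =
      μp * (1 - 2 * t ^ 2) + t ^ 2 * (κm + μp) * (κp + μp) / (κp + μp - (κp - κm) * v) := by
  have hs2 : sHS t ^ 2 = 1 - t ^ 2 := Real.sq_sqrt (by linarith)
  rw [fHS, qHS_of_branch2 h, hs2]
  linear_combination (-(t ^ 2 * (κm + v * (κp - κm) + μp))) * mul_inv_cancel₀ hd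

lemma eq_div_mul_one_sub_div_of_eq_mul_div {A Δ K v x : ℝ} (hA : A ≠ 0) (hΔ : Δ ≠ 0)
    (hK : K ≠ 0) (hd : A - Δ * v ≠ 0) (hx : x = K * A / (A - Δ * v)) :
    x ≠ 0 ∧ v = A / Δ * (1 - K / x) := by
  refine ⟨hx ▸ div_ne_zero (mul_ne_zero hK hA) hd, ?_⟩
  rw [hx]
  field_simp
  ring

/-- Closed form of the activating volume on the second branch: if
`v·Δκ·t > d₂(v)·s` and `f^HS(t;v) = c`, then `c ≠ μ⁺·(1 − 2t²)` and
`v = ((κ⁺+μ⁺)/Δκ)·(1 − t²·(κ⁻+μ⁺)/(c − μ⁺·(1 − 2t²)))`. -/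
theorem hs_activating_volume_branch2
    (κm κp μm μp : ℝ) (hκm : 0 < κm) (hκ : κm < κp) (hμm : 0 < μm) (hμ : μm < μp)
    (v : ℝ) (hv : v ∈ Set.Icc (0 : ℝ) 1) (t : ℝ) (ht : t ∈ Set.Icc (0 : ℝ) 1)
    (s : ℝ) (hs : s = Real.sqrt (1 - t ^ 2)) (c : ℝ)
    (hbr : v * (κp - κm) * t > (κp + μp - (κp - κm) * v) * s)
    (hact : fHS κm κp μm μp t v = c) :
    c ≠ μp * (1 - 2 * t ^ 2) ∧
    v = ((κp + μp) / (κp - κm)) *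
      (1 - t ^ 2 * (κm + μp) / (c - μp * (1 - 2 * t ^ 2))) := by
  obtain ⟨-, hv1⟩ := hv
  obtain ⟨ht0, ht1⟩ := ht
  subst hs
  have hd : 0 < κp + μp - (κp - κm) * v := by
    nlinarith [mul_nonneg (sub_pos.2 hκ).le (sub_nonneg.2 hv1)]
  have htne : t ≠ 0 := by
    rintro rfl
    nlinarith [mul_nonneg hd.le (Real.sqrt_nonneg (1 - 0 ^ 2))]
  obtain ⟨hc, hv⟩ := eq_div_mul_one_sub_div_of_eq_mul_div
    (K := t ^ 2 * (κm + μp)) (x := c - μp * (1 - 2 * t ^ 2)) (by linarith) (sub_ne_zero.2 hκ.ne')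
    (mul_ne_zero (pow_ne_zero 2 htne) (by linarith)) hd.ne'
    (by rw [← hact, fHS_of_branch2 (pow_le_one₀ ht0 ht1) hd.ne' hbr]; ring)
  exact ⟨fun h => hc (sub_eq_zero.2 h), hv⟩
end

section
/- Closed form of the activating volume on the third branch: let t ∈ [0,1], s = √(1 − t²), v ∈ [0,1] and c ∈ ℝ. If v·Δμ·s > d₃(v)·t and f^HS(t;v) = c, then c ≠ −κ⁺·(1 − 2t²) and v = ((κ⁺ + μ⁺)/Δμ) · (1 − (1 − t²)·(κ⁺ + μ⁻) / (c + κ⁺·(1 − 2t²))). -/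
open Real

/-!
On the third branch the correction is `q = (1 - v)(v Δμ² s² / d₃ - Δκ t²)`, and with `s² = 1 - t²`
the Voigt and correction terms combine into
`f^HS + κ⁺(1 - 2t²) = (1 - t²)(κ⁺ + μ⁻)(κ⁺ + μ⁺) / d₃(v)`.
Since `d₃(v) = κ⁺ + μ⁺ - Δμ v` is affine in `v`, this identity can be solved for `v`.
The branch really is the third one because `v Δκ · v Δμ ≤ d₂ d₃`, the difference being
`(κ⁺ + μ⁺) · d₁ ≥ 0`.
-/

theorem mul_le_sub_mul_of_sub_mul_lt {a b K s t : ℝ} (ha : 0 ≤ a) (hb : 0 ≤ b) (hab : a + b ≤ K)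
    (hs : 0 ≤ s) (hKb : 0 < K - b) (h : (K - b) * t < b * s) : a * t ≤ (K - a) * s := by
  have hprod : a * b ≤ (K - a) * (K - b) := by nlinarith
  have key : (K - b) * (a * t) ≤ (K - b) * ((K - a) * s) := by
    nlinarith [mul_le_mul_of_nonneg_left h.le ha, mul_le_mul_of_nonneg_right hprod hs]
  exact le_of_mul_le_mul_left key hKb

theorem eq_mul_one_sub_div_of_eq_mul_div {K b v P X : ℝ} (hK : K ≠ 0) (hb : b ≠ 0) (hP : P ≠ 0)
    (hd : K - b * v ≠ 0) (hX : X = P * K / (K - b * v)) : X ≠ 0 ∧ v = K / b * (1 - P / X) := by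
  subst hX
  refine ⟨div_ne_zero (mul_ne_zero hP hK) hd, ?_⟩
  field_simp
  ring

section HashinShtrikman

variable {κm κp μm μp t v : ℝ}

theorem qHS_of_branch3 (h₂ : v * (κp - κm) * t ≤ (κp + μp - (κp - κm) * v) * sHS t)
    (h₃ : (κp + μp - (μp - μm) * v) * t < v * (μp - μm) * sHS t) :
    qHS κm κp μm μp t v =
      (1 - v) * (v * (μp - μm) ^ 2 * sHS t ^ 2 / (κp + μp - (μp - μm) * v)
        - (κp - κm) * t ^ 2) := by
  rw [qHS, if_neg (fun h => h₃.not_ge h.2), if_neg h₂.not_gt]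

theorem branch2_le_of_branch3 (hκ : κm ≤ κp) (hμ : μm ≤ μp) (hv : 0 ≤ v)
    (hd₁ : 0 ≤ κp + μp - ((κp - κm) + (μp - μm)) * v) (hd₃ : 0 < κp + μp - (μp - μm) * v)
    (h₃ : (κp + μp - (μp - μm) * v) * t < v * (μp - μm) * sHS t) :
    v * (κp - κm) * t ≤ (κp + μp - (κp - κm) * v) * sHS t := by
  have := mul_le_sub_mul_of_sub_mul_lt (a := v * (κp - κm)) (b := v * (μp - μm))
    (K := κp + μp) (s := sHS t) (t := t)
    (by nlinarith) (by nlinarith) (by linarith) (sqrt_nonneg _) (by linarith) (by linarith)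
  linarith

theorem fHS_add_eq_of_branch3 (hd₃ : κp + μp - (μp - μm) * v ≠ 0) (ht : t ^ 2 ≤ 1)
    (h₂ : v * (κp - κm) * t ≤ (κp + μp - (κp - κm) * v) * sHS t)
    (h₃ : (κp + μp - (μp - μm) * v) * t < v * (μp - μm) * sHS t) :
    fHS κm κp μm μp t v + κp * (1 - 2 * t ^ 2) =
      (1 - t ^ 2) * (κp + μm) * (κp + μp) / (κp + μp - (μp - μm) * v) := by
  rw [fHS, qHS_of_branch3 h₂ h₃, sHS, sq_sqrt (by linarith), eq_div_iff hd₃]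
  linear_combination (v - 1) * div_mul_cancel₀ (v * (μp - μm) ^ 2 * (1 - t ^ 2)) hd₃

end HashinShtrikman

/-- Closed form of the activating volume on the third branch: if
`v·Δμ·s > d₃(v)·t` and `f^HS(t;v) = c`, then `c ≠ −κ⁺·(1 − 2t²)` and
`v = ((κ⁺+μ⁺)/Δμ)·(1 − (1 − t²)·(κ⁺+μ⁻)/(c + κ⁺·(1 − 2t²)))`. -/
theorem hs_activating_volume_branch3
    (κm κp μm μp : ℝ) (hκm : 0 < κm) (hκ : κm < κp) (hμm : 0 < μm) (hμ : μm < μp)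
    (v : ℝ) (hv : v ∈ Set.Icc (0 : ℝ) 1) (t : ℝ) (ht : t ∈ Set.Icc (0 : ℝ) 1)
    (s : ℝ) (hs : s = Real.sqrt (1 - t ^ 2)) (c : ℝ)
    (hbr : v * (μp - μm) * s > (κp + μp - (μp - μm) * v) * t)
    (hact : fHS κm κp μm μp t v = c) :
    c ≠ -κp * (1 - 2 * t ^ 2) ∧
    v = ((κp + μp) / (μp - μm)) *
      (1 - (1 - t ^ 2) * (κp + μm) / (c + κp * (1 - 2 * t ^ 2))) := by
  obtain ⟨hv0, hv1⟩ := hv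
  replace hs : s = sHS t := hs
  subst hs hact
  have hd₃ : 0 < κp + μp - (μp - μm) * v := by nlinarith
  have hs_pos : 0 < sHS t := by
    by_contra! h
    rw [le_antisymm h (sqrt_nonneg _), mul_zero] at hbr
    linarith [mul_nonneg hd₃.le ht.1]
  have ht₂ : 0 < 1 - t ^ 2 := sqrt_pos.mp hs_pos
  have h₂ := branch2_le_of_branch3 hκ.le hμ.le hv0 (by nlinarith) hd₃ hbr
  have hkey := fHS_add_eq_of_branch3 hd₃.ne' (by linarith) h₂ hbr
  obtain ⟨hne, hv⟩ := eq_mul_one_sub_div_of_eq_mul_div (K := κp + μp) (b := μp - μm)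
    (P := (1 - t ^ 2) * (κp + μm)) (by linarith) (by linarith)
    (mul_pos ht₂ (by linarith)).ne' hd₃.ne' hkey
  exact ⟨fun h => hne (by rw [h]; ring), hv⟩
end

section
/- Closed form of the activating volume on the first branch: let t ∈ [0,1], s = √(1 − t²), v ∈ [0,1] and c ∈ ℝ. Suppose v·Δκ·t ≤ d₂(v)·s, v·Δμ·s ≤ d₃(v)·t, and f^HS(t;v) = c. Define D = (c·(Δμ + Δκ) + (1 − 2t²)·(Δμ·κ⁺ − Δκ·μ⁺) + Δμ·Δκ·(s + t)²)² − 4·Δμ·Δκ·(κ⁺ + μ⁺)·(s + t)²·(c + (t² − 1)·μ⁻ − t²·κ⁻). Then D ≥ 0 and v = 1/2 + (c·(Δμ + Δκ) + (2t² − 1)·(Δκ·μ⁺ − Δμ·κ⁺) − √D) / (2·Δμ·Δκ·(t + s)²). -/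
open Real

/-!
On the first branch the equation `f^HS(t; v) = c`, once multiplied by the positive denominator
`d₁(v)`, is a quadratic equation in `v`. Its two roots are told apart by the sign of its slope at
`v`: that slope is `d₁(v) · ∂f^HS/∂v`, and `f^HS` increases with the volume fraction of the stiff
phase, so `v` is the smaller root.
-/

theorem quadratic_root_eq_of_two_mul_le {A B C D v : ℝ} (hA : A ≠ 0)
    (hv : A * v ^ 2 - B * v + C = 0) (hslope : 2 * A * v ≤ B) (hD : D = B ^ 2 - 4 * A * C) :
    0 ≤ D ∧ v = (B - √D) / (2 * A) := by
  have hdisc : D = (B - 2 * A * v) ^ 2 := by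
    linear_combination hD + (-4 * A) * hv
  rw [hdisc, Real.sqrt_sq (by linarith)]
  exact ⟨sq_nonneg _, by field_simp; ring⟩

section FirstBranchEquation

/- `p = Δκ + Δμ`, `K = κ⁺ + μ⁺`, `R = Δκ t² + Δμ (1 - t²)`, `X = Δκ t - Δμ s`,
`m = κ⁻ t² + μ⁻ (1 - t²)`; the hypothesis `h` is `f^HS(t; v) = c` on the first branch, multiplied by `d₁(v) = K - p v`. -/
variable {p K R X m c v : ℝ}

theorem first_branch_quadratic (h : (m + v * R - c) * (K - p * v) = v * (1 - v) * X ^ 2) :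
    (p * R - X ^ 2) * v ^ 2 - (R * K - (m - c) * p - X ^ 2) * v + K * (c - m) = 0 := by
  linear_combination -h

theorem first_branch_slope_identity (h : (m + v * R - c) * (K - p * v) = v * (1 - v) * X ^ 2) :
    p * ((R * K - (m - c) * p - X ^ 2) - 2 * (p * R - X ^ 2) * v) * (K - p * v)
      = K * (K - p) * X ^ 2 + (p * R - X ^ 2) * (K - p * v) ^ 2 := by
  linear_combination (-p * p) * h

theorem first_branch_slope_nonneg (hp : 0 < p) (hpK : p ≤ K) (hd : 0 < K - p * v)
    (hA : 0 ≤ p * R - X ^ 2) (h : (m + v * R - c) * (K - p * v) = v * (1 - v) * X ^ 2) :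
    2 * (p * R - X ^ 2) * v ≤ R * K - (m - c) * p - X ^ 2 := by
  have hprod : 0 ≤ p * ((R * K - (m - c) * p - X ^ 2) - 2 * (p * R - X ^ 2) * v) * (K - p * v) := by
    rw [first_branch_slope_identity h]
    have : 0 ≤ K * (K - p) := mul_nonneg (by linarith) (by linarith)
    positivity
  have := (mul_nonneg_iff_of_pos_left hp).mp ((mul_nonneg_iff_of_pos_right hd).mp hprod)
  linarith

end FirstBranchEquation

theorem one_le_sqrt_one_sub_sq_add {t : ℝ} (h₀ : 0 ≤ t) (h₁ : t ≤ 1) : 1 ≤ √(1 - t ^ 2) + t := by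
  have hs2 : √(1 - t ^ 2) ^ 2 = 1 - t ^ 2 := Real.sq_sqrt (by nlinarith)
  have hs1 : √(1 - t ^ 2) ≤ 1 := Real.sqrt_le_one.mpr (by nlinarith)
  nlinarith [Real.sqrt_nonneg (1 - t ^ 2)]

theorem first_branch_leading_coeff {a b t s : ℝ} (hs2 : s ^ 2 = 1 - t ^ 2) :
    (a + b) * (a * t ^ 2 + b * (1 - t ^ 2)) - (a * t - b * s) ^ 2 = b * a * (s + t) ^ 2 := by
  linear_combination (-a * b - b ^ 2) * hs2

section FirstBranch

variable {κm κp μm μp t v c : ℝ}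

theorem qHS_of_first_branch
    (h₁ : v * (κp - κm) * t ≤ (κp + μp - (κp - κm) * v) * sHS t)
    (h₂ : v * (μp - μm) * sHS t ≤ (κp + μp - (μp - μm) * v) * t) :
    qHS κm κp μm μp t v = v * (1 - v) * ((κp - κm) * t - (μp - μm) * sHS t) ^ 2 /
      (κp + μp - ((κp - κm) + (μp - μm)) * v) :=
  if_pos ⟨h₁, h₂⟩

theorem fHS_first_branch_mul_denom (hd : κp + μp - ((κp - κm) + (μp - μm)) * v ≠ 0)
    (h₁ : v * (κp - κm) * t ≤ (κp + μp - (κp - κm) * v) * sHS t)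
    (h₂ : v * (μp - μm) * sHS t ≤ (κp + μp - (μp - μm) * v) * t)
    (hc : fHS κm κp μm μp t v = c) :
    (κm * t ^ 2 + μm * (1 - t ^ 2) + v * ((κp - κm) * t ^ 2 + (μp - μm) * (1 - t ^ 2)) - c)
        * (κp + μp - ((κp - κm) + (μp - μm)) * v)
      = v * (1 - v) * ((κp - κm) * t - (μp - μm) * sHS t) ^ 2 := by
  rw [← hc, fHS, qHS_of_first_branch h₁ h₂]
  linear_combination div_mul_cancel₀ (v * (1 - v) * ((κp - κm) * t - (μp - μm) * sHS t) ^ 2) hd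

end FirstBranch

/-- Closed form of the activating volume on the first branch: if
`v·Δκ·t ≤ d₂(v)·s`, `v·Δμ·s ≤ d₃(v)·t` and `f^HS(t;v) = c`, then the
discriminant `D` is nonnegative and `v` is given by the "negative" root of the
associated quadratic equation. -/
theorem hs_activating_volume_branch1
    (κm κp μm μp : ℝ) (hκm : 0 < κm) (hκ : κm < κp) (hμm : 0 < μm) (hμ : μm < μp)
    (v : ℝ) (hv : v ∈ Set.Icc (0 : ℝ) 1) (t : ℝ) (ht : t ∈ Set.Icc (0 : ℝ) 1)
    (s : ℝ) (hs : s = Real.sqrt (1 - t ^ 2)) (c : ℝ)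
    (hbr1 : v * (κp - κm) * t ≤ (κp + μp - (κp - κm) * v) * s)
    (hbr2 : v * (μp - μm) * s ≤ (κp + μp - (μp - μm) * v) * t)
    (hact : fHS κm κp μm μp t v = c)
    (D : ℝ)
    (hD : D = (c * ((μp - μm) + (κp - κm))
        + (1 - 2 * t ^ 2) * ((μp - μm) * κp - (κp - κm) * μp)
        + (μp - μm) * (κp - κm) * (s + t) ^ 2) ^ 2
      - 4 * (μp - μm) * (κp - κm) * (κp + μp) * (s + t) ^ 2
        * (c + (t ^ 2 - 1) * μm - t ^ 2 * κm)) :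
    0 ≤ D ∧
    v = 1 / 2 + (c * ((μp - μm) + (κp - κm))
        + (2 * t ^ 2 - 1) * ((κp - κm) * μp - (μp - μm) * κp)
        - Real.sqrt D) / (2 * (μp - μm) * (κp - κm) * (t + s) ^ 2) := by
  obtain ⟨-, hv1⟩ := hv
  obtain ⟨ht0, ht1⟩ := ht
  have hs0 : 0 ≤ s := hs ▸ Real.sqrt_nonneg _
  have hs2 : s ^ 2 = 1 - t ^ 2 := hs ▸ Real.sq_sqrt (by nlinarith)
  have hst : 0 < s + t := hs ▸ one_le_sqrt_one_sub_sq_add ht0 ht1 |>.trans_lt' one_pos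
  have hd : 0 < κp + μp - ((κp - κm) + (μp - μm)) * v := by
    have := mul_nonneg (by linarith : 0 ≤ (κp - κm) + (μp - μm)) (sub_nonneg.2 hv1)
    linarith
  have hsHS : sHS t = s := hs.symm
  rw [← hsHS] at hbr1 hbr2
  have heq := fHS_first_branch_mul_denom hd.ne' hbr1 hbr2 hact
  rw [hsHS] at heq
  have hA := first_branch_leading_coeff (a := κp - κm) (b := μp - μm) hs2
  have hB : ((κp - κm) * t ^ 2 + (μp - μm) * (1 - t ^ 2)) * (κp + μp)
        - (κm * t ^ 2 + μm * (1 - t ^ 2) - c) * ((κp - κm) + (μp - μm))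
        - ((κp - κm) * t - (μp - μm) * s) ^ 2
      = (μp - μm) * (κp - κm) * (s + t) ^ 2 + c * ((μp - μm) + (κp - κm))
        + (2 * t ^ 2 - 1) * ((κp - κm) * μp - (μp - μm) * κp) := by
    linear_combination hA
  have hApos : 0 < (μp - μm) * (κp - κm) * (s + t) ^ 2 :=
    mul_pos (mul_pos (by linarith) (by linarith)) (by positivity)
  have hquad := first_branch_quadratic heq
  have hslope := first_branch_slope_nonneg (by linarith) (by linarith) hd (hA ▸ hApos.le) heq
  rw [hA, hB] at hquad hslope
  obtain ⟨hD0, hroot⟩ := quadratic_root_eq_of_two_mul_le hApos.ne' hquad hslope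
    (hD.trans (by ring))
  refine ⟨hD0, hroot.trans ?_⟩
  rw [add_comm t s]
  field_simp [(sub_pos.2 hκ).ne', (sub_pos.2 hμ).ne', hst.ne']
  ring
end

section
/- The Hashin–Shtrikman feasible set F_HS in the product space of volume fractions and Kelvin–Mandel elasticity matrices is not convex: the pairs (0, M(κ⁻,μ⁻)) and (1, M(κ⁺,μ⁺)) belong to F_HS, yet for every θ ∈ (0,1) the convex combination (θ, (1−θ)·M(κ⁻,μ⁻) + θ·M(κ⁺,μ⁺)) does not belong to F_HS. -/
open Real

open Matrix

/-- Kelvin–Mandel matrix of the isotropic plane-stress elasticity tensor with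
bulk modulus `κ` and shear modulus `μ`. -/
noncomputable def KM (κ μ : ℝ) : Matrix (Fin 3) (Fin 3) ℝ :=
  !![κ + μ, κ - μ, 0; κ - μ, κ + μ, 0; 0, 0, 2 * μ]

/-- The Hashin–Shtrikman feasible set in the product space of volume fractions
and Kelvin–Mandel elasticity matrices. -/
noncomputable def FHS (κm κp μm μp : ℝ) : Set (ℝ × Matrix (Fin 3) (Fin 3) ℝ) :=
  {p | p.1 ∈ Set.Icc (0 : ℝ) 1 ∧ p.2.IsSymm ∧ (p.2 - KM κm μm).PosSemidef ∧
    ∀ e : Fin 3 → ℝ, (e 0) ^ 2 + (e 1) ^ 2 + (e 2) ^ 2 = 1 / 2 →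
      dotProduct e (p.2.mulVec e) ≤ fHS κm κp μm μp (abs (e 0 + e 1)) p.1}

/-!
The endpoints lie in `F_HS` because `q(t; 0) = q(t; 1) = 0`, so there `f^HS` is exactly the
energy of the pure phase. The segment between them consists of the Voigt averages
`M((1-θ)κ⁻ + θκ⁺, (1-θ)μ⁻ + θμ⁺)`, whose energy on the pure dilatation `e = (1/2, 1/2, 0)`
(`t = 1`) is the Voigt bulk modulus; but `f^HS(1; θ)` is that modulus minus
`q(1; θ) = (1-θ) θ Δκ² / d₂(θ) > 0`.
-/

lemma KM_isSymm (κ μ : ℝ) : (KM κ μ).IsSymm := by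
  ext i j
  fin_cases i <;> fin_cases j <;> simp [KM]

lemma smul_KM_add_smul_KM (a b κ μ κ' μ' : ℝ) :
    a • KM κ μ + b • KM κ' μ' = KM (a * κ + b * κ') (a * μ + b * μ') := by
  ext i j
  fin_cases i <;> fin_cases j <;> simp [KM] <;> ring

lemma KM_sub_KM (κ μ κ' μ' : ℝ) : KM κ μ - KM κ' μ' = KM (κ - κ') (μ - μ') := by
  ext i j
  fin_cases i <;> fin_cases j <;> simp [KM] <;> ring

lemma dotProduct_KM_mulVec (κ μ : ℝ) (e : Fin 3 → ℝ) :
    e ⬝ᵥ KM κ μ *ᵥ e = κ * (e 0 + e 1) ^ 2 + μ * ((e 0 - e 1) ^ 2 + 2 * e 2 ^ 2) := by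
  simp [KM, mulVec, dotProduct, Fin.sum_univ_three]
  ring

lemma dotProduct_KM_mulVec_of_sum_sq (κ μ : ℝ) {e : Fin 3 → ℝ}
    (he : e 0 ^ 2 + e 1 ^ 2 + e 2 ^ 2 = 1 / 2) :
    e ⬝ᵥ KM κ μ *ᵥ e = κ * |e 0 + e 1| ^ 2 + μ * (1 - |e 0 + e 1| ^ 2) := by
  rw [dotProduct_KM_mulVec, sq_abs]
  linear_combination 2 * μ * he

lemma KM_posSemidef {κ μ : ℝ} (hκ : 0 ≤ κ) (hμ : 0 ≤ μ) : (KM κ μ).PosSemidef := by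
  refine posSemidef_iff_dotProduct_mulVec.mpr ⟨KM_isSymm κ μ, fun e => ?_⟩
  rw [star_trivial, dotProduct_KM_mulVec]
  positivity

section HashinShtrikman

variable {κm κp μm μp : ℝ}

lemma sHS_one : sHS 1 = 0 := by
  simp [sHS]

lemma qHS_zero_fraction {t : ℝ} (ht : 0 ≤ t) (h : 0 < κp + μp) :
    qHS κm κp μm μp t 0 = 0 := by
  have hs : 0 ≤ sHS t := Real.sqrt_nonneg _
  rw [qHS, if_pos ⟨by simpa using mul_nonneg h.le hs, by simpa using mul_nonneg h.le ht⟩]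
  simp

lemma qHS_one_fraction (t : ℝ) : qHS κm κp μm μp t 1 = 0 := by
  unfold qHS
  split_ifs <;> simp

lemma fHS_zero_fraction {t : ℝ} (ht : 0 ≤ t) (h : 0 < κp + μp) :
    fHS κm κp μm μp t 0 = κm * t ^ 2 + μm * (1 - t ^ 2) := by
  simp [fHS, qHS_zero_fraction ht h]

lemma fHS_one_fraction (t : ℝ) :
    fHS κm κp μm μp t 1 = κp * t ^ 2 + μp * (1 - t ^ 2) := by
  rw [fHS, qHS_one_fraction]
  ring

/-- At `t = 1` only the bulk-dominated branch of `q` applies, since `s = 0`. -/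
lemma qHS_one_eq {θ : ℝ} (hθ : 0 < θ) (hκ : κm < κp) :
    qHS κm κp μm μp 1 θ = (1 - θ) * (θ * (κp - κm) ^ 2 / (κp + μp - (κp - κm) * θ)) := by
  have hbulk : 0 < θ * (κp - κm) := mul_pos hθ (sub_pos.mpr hκ)
  rw [qHS, sHS_one, if_neg (by intro h; linarith [h.1]), if_pos (by linarith)]
  ring

lemma fHS_one_lt {θ : ℝ} (hθ : θ ∈ Set.Ioo (0 : ℝ) 1) (hκ : κm < κp)
    (hd : 0 < κp + μp - (κp - κm) * θ) :
    fHS κm κp μm μp 1 θ < κm + θ * (κp - κm) := by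
  have hq : 0 < qHS κm κp μm μp 1 θ := by
    rw [qHS_one_eq hθ.1 hκ]
    exact mul_pos (sub_pos.mpr hθ.2) (div_pos (mul_pos hθ.1 (pow_pos (sub_pos.mpr hκ) 2)) hd)
  rw [fHS]
  linarith

end HashinShtrikman

/-- Nonconvexity of the Hashin–Shtrikman feasible set: the endpoints
`(0, M(κ⁻,μ⁻))` and `(1, M(κ⁺,μ⁺))` belong to `F_HS`, yet no interior convex
combination of them does. -/
theorem hs_feasible_set_nonconvex
    (κm κp μm μp : ℝ) (hκm : 0 < κm) (hκ : κm < κp) (hμm : 0 < μm) (hμ : μm < μp) :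
    ((0 : ℝ), KM κm μm) ∈ FHS κm κp μm μp ∧
    ((1 : ℝ), KM κp μp) ∈ FHS κm κp μm μp ∧
    ∀ θ : ℝ, θ ∈ Set.Ioo (0 : ℝ) 1 →
      (θ, (1 - θ) • KM κm μm + θ • KM κp μp) ∉ FHS κm κp μm μp := by
  refine ⟨⟨by simp, KM_isSymm _ _, by simpa using PosSemidef.zero, fun e he => ?_⟩,
    ⟨by simp, KM_isSymm _ _, ?_, fun e he => ?_⟩, ?_⟩
  · rw [dotProduct_KM_mulVec_of_sum_sq _ _ he, fHS_zero_fraction (abs_nonneg _) (by linarith)]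
  · rw [KM_sub_KM]
    exact KM_posSemidef (by linarith) (by linarith)
  · rw [dotProduct_KM_mulVec_of_sum_sq _ _ he, fHS_one_fraction]
  · rintro θ hθ ⟨-, -, -, hbound⟩
    have hdilatation := hbound ![1 / 2, 1 / 2, 0] (by simp; norm_num)
    rw [smul_KM_add_smul_KM, dotProduct_KM_mulVec] at hdilatation
    simp only [cons_val] at hdilatation
    norm_num at hdilatation
    have hvoigt := fHS_one_lt (μm := μm) (μp := μp) hθ hκ (by nlinarith [hθ.1, hθ.2])
    linarith
end

section
/- Explicit maximal orthotropic strain energy at fixed trace: let a, b, c, m be real numbers, t ∈ [0,1], and set Ξ = a − 2b + c − 4m. Consider the maximum S of the quadratic form a·x² + 2b·x·y + c·y² + 4m·r² over all reals x, y, r satisfying x + y = t and x² + y² + 2r² = 1/2 (this feasible set is nonempty and compact, so the maximum is attained). If Ξ < 0 and t ≤ |Ξ| / √(Ξ² + (a − c)²), then S = (t²/4)·(a + 2b + c) + m·(1 − t²) − t²·(a − c)² / (4Ξ); otherwise S = (1/4)·(a − 2b + c) + b·t² + (|a − c|/2)·t·√(1 − t²). -/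
/-!
Writing `x = (t + w)/2`, `y = (t - w)/2`, the constraints leave the single parameter `w = x - y`,
which ranges over `[-√(1 - t²), √(1 - t²)]` (with `r² = (1 - t² - w²)/4`), and the energy becomes
the quadratic `Ξ/4 · w² + (a - c)t/2 · w + const` in `w`. Its maximum on the interval is the vertex
value when `Ξ < 0` and the vertex `-(a - c)t/Ξ` lies in the interval, which is the threshold
condition on `t`; otherwise it is the value at the endpoint on the side of the sign of `a - c`.
-/

open Set

section QuadraticOnInterval

variable {p q k R : ℝ}

theorem isGreatest_image_quadratic_Icc_of_vertex_mem (hp : p < 0) (hq : |q| ≤ -2 * p * R) :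
    IsGreatest ((fun w => p * w ^ 2 + q * w + k) '' Icc (-R) R) (k - q ^ 2 / (4 * p)) := by
  refine ⟨⟨-q / (2 * p), abs_le.mp ?_, by field_simp; ring⟩, ?_⟩
  · rw [abs_div, abs_neg, abs_of_neg (by linarith : 2 * p < 0), div_le_iff₀ (by linarith)]
    linarith
  · rintro _ ⟨w, -, rfl⟩
    have hgap : k - q ^ 2 / (4 * p) - (p * w ^ 2 + q * w + k) = (2 * p * w + q) ^ 2 / (-4 * p) := by
      have := hp.ne
      field_simp
      ring
    have : 0 ≤ (2 * p * w + q) ^ 2 / (-4 * p) := div_nonneg (sq_nonneg _) (by linarith)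
    linarith

theorem isGreatest_image_quadratic_Icc_of_vertex_not_mem (hR : 0 ≤ R)
    (h : 0 ≤ p ∨ -2 * p * R ≤ |q|) :
    IsGreatest ((fun w => p * w ^ 2 + q * w + k) '' Icc (-R) R) (p * R ^ 2 + |q| * R + k) := by
  constructor
  · rcases le_total 0 q with hq | hq
    · exact ⟨R, ⟨by linarith, le_rfl⟩, by simp only [abs_of_nonneg hq]⟩
    · exact ⟨-R, ⟨le_rfl, by linarith⟩, by simp only [abs_of_nonpos hq]; ring⟩
  · rintro _ ⟨w, hw, rfl⟩
    have hwR : |w| ≤ R := abs_le.mpr hw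
    -- `s ↦ p s² + |q| s` is nondecreasing on `[0, R]`
    have hslope : 0 ≤ p * (R + |w|) + |q| := by
      rcases le_or_gt 0 p with hp | hp
      · positivity
      · have := mul_nonneg_of_nonpos_of_nonpos hp.le (sub_nonpos.mpr hwR)
        rcases h with h | h <;> linarith
    have hqw : q * w ≤ |q| * |w| := (le_abs_self _).trans (abs_mul q w).le
    show p * w ^ 2 + q * w + k ≤ _
    rw [← sq_abs w]
    nlinarith [mul_nonneg (sub_nonneg.mpr hwR) hslope]

end QuadraticOnInterval

theorem le_abs_div_sqrt_sq_add_sq_iff {X d t : ℝ} (hX : X ≠ 0) (ht0 : 0 ≤ t) (ht2 : t ^ 2 ≤ 1) :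
    t ≤ |X| / √(X ^ 2 + d ^ 2) ↔ |d| * t ≤ |X| * √(1 - t ^ 2) := by
  have hs : 0 < √(X ^ 2 + d ^ 2) := Real.sqrt_pos.mpr (by positivity)
  rw [le_div_iff₀ hs, ← sq_le_sq₀ (mul_nonneg ht0 hs.le) (abs_nonneg X),
    ← sq_le_sq₀ (by positivity : 0 ≤ |d| * t) (by positivity : 0 ≤ |X| * √(1 - t ^ 2)),
    mul_pow, mul_pow, mul_pow, Real.sq_sqrt (by positivity), Real.sq_sqrt (by linarith),
    sq_abs, sq_abs]
  constructor <;> intro h <;> linarith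

theorem setOf_energy_fixed_trace_eq_image (a b c m t : ℝ) (ht2 : t ^ 2 ≤ 1) :
    {E : ℝ | ∃ x y r : ℝ, x + y = t ∧ x ^ 2 + y ^ 2 + 2 * r ^ 2 = 1 / 2 ∧
        E = a * x ^ 2 + 2 * b * (x * y) + c * y ^ 2 + 4 * m * r ^ 2} =
      (fun w => (a - 2 * b + c - 4 * m) / 4 * w ^ 2 + (a - c) * t / 2 * w +
          ((t ^ 2 / 4) * (a + 2 * b + c) + m * (1 - t ^ 2))) ''
        Icc (-√(1 - t ^ 2)) √(1 - t ^ 2) := by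
  ext E
  constructor
  · rintro ⟨x, y, r, rfl, hnorm, rfl⟩
    refine ⟨x - y, abs_le.mp (Real.abs_le_sqrt (by nlinarith [sq_nonneg r])), ?_⟩
    linear_combination (-2 * m) * hnorm
  · rintro ⟨w, hw, rfl⟩
    have hw2 : w ^ 2 ≤ 1 - t ^ 2 := by
      simpa [Real.sq_sqrt (sub_nonneg.mpr ht2)] using sq_le_sq' hw.1 hw.2
    have hr : √((1 - t ^ 2 - w ^ 2) / 4) ^ 2 = (1 - t ^ 2 - w ^ 2) / 4 :=
      Real.sq_sqrt (by linarith)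
    refine ⟨(t + w) / 2, (t - w) / 2, √((1 - t ^ 2 - w ^ 2) / 4), by ring, ?_, ?_⟩
    · rw [hr]; ring
    · rw [hr]; ring

/-- Explicit maximal orthotropic strain energy at fixed trace: the maximum of
`a·x² + 2b·x·y + c·y² + 4m·r²` over `x + y = t`, `x² + y² + 2r² = 1/2` is given
by an interior stationary value when `Ξ = a − 2b + c − 4m < 0` and
`t ≤ |Ξ|/√(Ξ² + (a−c)²)`, and by the boundary value otherwise. -/
theorem orthotropic_max_energy_at_fixed_trace
    (a b c m t : ℝ) (ht : t ∈ Set.Icc (0 : ℝ) 1) :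
    IsGreatest
      {E : ℝ | ∃ x y r : ℝ, x + y = t ∧ x ^ 2 + y ^ 2 + 2 * r ^ 2 = 1 / 2 ∧
        E = a * x ^ 2 + 2 * b * (x * y) + c * y ^ 2 + 4 * m * r ^ 2}
      (if a - 2 * b + c - 4 * m < 0 ∧
          t ≤ |a - 2 * b + c - 4 * m| /
            Real.sqrt ((a - 2 * b + c - 4 * m) ^ 2 + (a - c) ^ 2) then
        (t ^ 2 / 4) * (a + 2 * b + c) + m * (1 - t ^ 2)
          - t ^ 2 * (a - c) ^ 2 / (4 * (a - 2 * b + c - 4 * m))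
      else
        (1 / 4) * (a - 2 * b + c) + b * t ^ 2
          + (|a - c| / 2) * t * Real.sqrt (1 - t ^ 2)) := by
  obtain ⟨ht0, ht1⟩ := ht
  have ht2 : t ^ 2 ≤ 1 := by nlinarith
  rw [setOf_energy_fixed_trace_eq_image a b c m t ht2]
  have hq : |(a - c) * t / 2| = |a - c| * t / 2 := by
    rw [abs_div, abs_mul, abs_of_nonneg ht0, abs_two]
  set Ξ := a - 2 * b + c - 4 * m
  split_ifs with h
  · obtain ⟨hΞ, hthr⟩ := h
    rw [le_abs_div_sqrt_sq_add_sq_iff hΞ.ne ht0 ht2, abs_of_neg hΞ] at hthr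
    convert isGreatest_image_quadratic_Icc_of_vertex_mem (q := (a - c) * t / 2)
      (k := (t ^ 2 / 4) * (a + 2 * b + c) + m * (1 - t ^ 2)) (R := √(1 - t ^ 2))
      (by linarith : Ξ / 4 < 0) (by rw [hq]; linarith) using 1
    field_simp
    ring
  · have hend : 0 ≤ Ξ / 4 ∨ -2 * (Ξ / 4) * √(1 - t ^ 2) ≤ |(a - c) * t / 2| := by
      rcases le_or_gt 0 Ξ with hΞ | hΞ
      · exact Or.inl (by linarith)
      · have hthr : ¬ |a - c| * t ≤ |Ξ| * √(1 - t ^ 2) := fun h' =>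
          h ⟨hΞ, (le_abs_div_sqrt_sq_add_sq_iff hΞ.ne ht0 ht2).mpr h'⟩
        rw [abs_of_neg hΞ] at hthr
        exact Or.inr (by rw [hq]; linarith)
    convert isGreatest_image_quadratic_Icc_of_vertex_not_mem
      (k := (t ^ 2 / 4) * (a + 2 * b + c) + m * (1 - t ^ 2)) (Real.sqrt_nonneg _) hend using 1
    rw [hq, Real.sq_sqrt (by linarith)]
    ring
end

section
/- If Ψ : ℝ → ℝ is convex on the half-open interval (0,1] and nonincreasing on (0,1], then the function v ↦ (1 − v)·Ψ(v) is convex on (0,1]. -/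
/-- If `Ψ` is convex and nonincreasing on the half-open interval `(0, 1]`, then
`v ↦ (1 − v)·Ψ(v)` is convex on `(0, 1]`. -/
theorem convexOn_one_sub_mul_of_convexOn_antitoneOn
    (Ψ : ℝ → ℝ) (hconv : ConvexOn ℝ (Set.Ioc (0 : ℝ) 1) Ψ)
    (hanti : AntitoneOn Ψ (Set.Ioc (0 : ℝ) 1)) :
    ConvexOn ℝ (Set.Ioc (0 : ℝ) 1) (fun v => (1 - v) * Ψ v) := by
  refine ⟨convex_Ioc 0 1, ?_⟩
  rintro x ⟨hx0, hx1⟩ y ⟨hy0, hy1⟩ θ η hθ hη hθη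
  obtain rfl : η = 1 - θ := by linarith
  simp only [smul_eq_mul]
  set v := θ * x + (1 - θ) * y with hv
  have hm : 0 < min x y := lt_min hx0 hy0
  have hv0 : 0 < v := by
    have h1 : θ * min x y ≤ θ * x := mul_le_mul_of_nonneg_left (min_le_left x y) hθ
    have h2 : (1 - θ) * min x y ≤ (1 - θ) * y :=
      mul_le_mul_of_nonneg_left (min_le_right x y) hη
    nlinarith
  have hv1 : v ≤ 1 := by nlinarith
  set a := θ * (1 - x) with hadef
  set b := (1 - θ) * (1 - y) with hbdef
  have ha : 0 ≤ a := mul_nonneg hθ (by linarith)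
  have hb : 0 ≤ b := mul_nonneg hη (by linarith)
  have hs : a + b = 1 - v := by rw [hadef, hbdef, hv]; ring
  have hRHS : θ * ((1 - x) * Ψ x) + (1 - θ) * ((1 - y) * Ψ y) = a * Ψ x + b * Ψ y := by
    rw [hadef, hbdef]; ring
  show (1 - v) * Ψ v ≤ θ * ((1 - x) * Ψ x) + (1 - θ) * ((1 - y) * Ψ y)
  rw [hRHS, ← hs]
  rcases eq_or_lt_of_le (by linarith : (0:ℝ) ≤ a + b) with h0 | hspos
  · have ha0 : a = 0 := by linarith
    have hb0 : b = 0 := by linarith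
    rw [← h0, ha0, hb0]; ring_nf; rfl
  · have hsne : a + b ≠ 0 := ne_of_gt hspos
    set lam := a / (a + b) with hlamdef
    set mu := b / (a + b) with hmudef
    have hlam : 0 ≤ lam := div_nonneg ha hspos.le
    have hmu : 0 ≤ mu := div_nonneg hb hspos.le
    have hsum : lam + mu = 1 := by rw [hlamdef, hmudef]; field_simp
    set w := lam * x + mu * y with hw
    have hwq : w = (a * x + b * y) / (a + b) := by rw [hw, hlamdef, hmudef]; ring
    have hpos : 0 < a * x + b * y := by
      have h1 : a * min x y ≤ a * x := mul_le_mul_of_nonneg_left (min_le_left x y) ha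
      have h2 : b * min x y ≤ b * y := mul_le_mul_of_nonneg_left (min_le_right x y) hb
      have h3 : 0 < (a + b) * min x y := mul_pos hspos hm
      nlinarith
    have hw0 : 0 < w := hwq ▸ div_pos hpos hspos
    have hwv : w ≤ v := by
      rw [hwq, div_le_iff₀ hspos]
      have key : v * (a + b) - (a * x + b * y) = θ * (1 - θ) * (x - y) ^ 2 := by
        rw [hadef, hbdef, hv]; ring
      nlinarith [mul_nonneg (mul_nonneg hθ hη) (sq_nonneg (x - y))]
    have hw1 : w ≤ 1 := le_trans hwv hv1
    have hΨw : Ψ (lam * x + mu * y) ≤ lam * Ψ x + mu * Ψ y := by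
      have := hconv.2 (Set.mem_Ioc.mpr ⟨hx0, hx1⟩) (Set.mem_Ioc.mpr ⟨hy0, hy1⟩) hlam hmu hsum
      simpa using this
    have hΨv : Ψ v ≤ Ψ w :=
      hanti (Set.mem_Ioc.mpr ⟨hw0, hw1⟩) (Set.mem_Ioc.mpr ⟨hv0, hv1⟩) hwv
    calc (a + b) * Ψ v ≤ (a + b) * Ψ w := by
          exact mul_le_mul_of_nonneg_left (le_trans hΨv (le_refl _)) hspos.le
      _ ≤ (a + b) * (lam * Ψ x + mu * Ψ y) := by
          exact mul_le_mul_of_nonneg_left (hw ▸ hΨw) hspos.le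
      _ = a * Ψ x + b * Ψ y := by
          rw [hlamdef, hmudef]; field_simp
end
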